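/- For all probability distributions α₀, α₁ on A and β₀, β₁ on B and each c ∈ {0,1}: the classical cheating probability C_{B,c} is attained at some tuple (p₁,…,pₙ) ∈ P_B all of whose entries lie in {0,1}, and the classical cheating probability C_{A,c} is attained at some tuple (s₁,…,sₙ,s) ∈ P_A all of whose entries lie in {0,1}; that is, in a classical BCCF-protocol Alice and Bob each have an optimal cheating strategy which is deterministic. -/
import Mathlib


open Finset

namespace BCCF

variable {n : ℕ}

/-- Membership in Bob's cheating polytope `P_B`, encoded on full products:
`p j` plays the role of `p_{j+1}` and is required to depend only on the
coordinates `x_1,…,x_{j+1}` and `y_1,…,y_{j+1}`. -/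
def MemBob (A B : Fin n → Type) [∀ i, Fintype (A i)] [∀ i, Fintype (B i)]
    (p : Fin n → ((i : Fin n) → A i) → ((i : Fin n) → B i) → ℝ) : Prop :=
  (∀ j x y, 0 ≤ p j x y) ∧
  (∀ (j : Fin n) (x x' : (i : Fin n) → A i) (y y' : (i : Fin n) → B i),
      (∀ i, i ≤ j → x i = x' i) → (∀ i, i ≤ j → y i = y' i) → p j x y = p j x' y') ∧
  (∀ j : Fin n, (j : ℕ) = 0 → ∀ x y, ∑ b : B j, p j x (Function.update y j b) = 1) ∧
  (∀ j k : Fin n, (j : ℕ) = (k : ℕ) + 1 → ∀ x y,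
      ∑ b : B j, p j x (Function.update y j b) = p k x y)

/-- Membership in Alice's cheating polytope `P_A`, encoded on full products:
`s j` plays the role of `s_{j+1}` (depending on `x_1,…,x_{j+1}` and
`y_1,…,y_j`) and `sF` plays the role of the final function `s` on `{0,1}×A×B`. -/
def MemAlice (A B : Fin n → Type) [∀ i, Fintype (A i)] [∀ i, Fintype (B i)] (hn : 0 < n)
    (s : Fin n → ((i : Fin n) → A i) → ((i : Fin n) → B i) → ℝ)
    (sF : Bool → ((i : Fin n) → A i) → ((i : Fin n) → B i) → ℝ) : Prop :=
  (∀ j x y, 0 ≤ s j x y) ∧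
  (∀ a x y, 0 ≤ sF a x y) ∧
  (∀ (j : Fin n) (x x' : (i : Fin n) → A i) (y y' : (i : Fin n) → B i),
      (∀ i, i ≤ j → x i = x' i) → (∀ i, i < j → y i = y' i) → s j x y = s j x' y') ∧
  (∀ j : Fin n, (j : ℕ) = 0 → ∀ x y, ∑ a : A j, s j (Function.update x j a) y = 1) ∧
  (∀ j k : Fin n, (j : ℕ) = (k : ℕ) + 1 → ∀ x y,
      ∑ a : A j, s j (Function.update x j a) y = s k x y) ∧
  (∀ x y, sF false x y + sF true x y = s ⟨n - 1, Nat.sub_lt hn Nat.one_pos⟩ x y)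

/-- Fidelity of two nonnegative vectors. -/
noncomputable def fid {ι : Type} [Fintype ι] (u v : ι → ℝ) : ℝ :=
  (∑ i, Real.sqrt (u i * v i)) ^ 2

/-- `u` is a probability distribution. -/
def IsProbDist {ι : Type} [Fintype ι] (u : ι → ℝ) : Prop :=
  (∀ i, 0 ≤ u i) ∧ ∑ i, u i = 1

/-- Trace distance of two vectors. -/
noncomputable def tdist {ι : Type} [Fintype ι] (u v : ι → ℝ) : ℝ :=
  (1 / 2) * ∑ i, |u i - v i|

/-- Objective value of cheating Bob forcing outcome `c` in the quantum protocol. -/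
noncomputable def bobObjQ (A B : Fin n → Type) [∀ i, Fintype (A i)] [∀ i, Fintype (B i)]
    (hn : 0 < n) (α : Bool → ((i : Fin n) → A i) → ℝ)
    (β : Bool → ((i : Fin n) → B i) → ℝ) (c : Bool)
    (p : Fin n → ((i : Fin n) → A i) → ((i : Fin n) → B i) → ℝ) : ℝ :=
  (1 / 2) * ∑ a : Bool,
    fid (fun y => ∑ x, α a x * p ⟨n - 1, Nat.sub_lt hn Nat.one_pos⟩ x y) (β (Bool.xor a c))

/-- Objective value of cheating Alice forcing outcome `c` in the quantum protocol. -/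
noncomputable def aliceObjQ (A B : Fin n → Type) [∀ i, Fintype (A i)] [∀ i, Fintype (B i)]
    (α : Bool → ((i : Fin n) → A i) → ℝ)
    (β : Bool → ((i : Fin n) → B i) → ℝ) (c : Bool)
    (sF : Bool → ((i : Fin n) → A i) → ((i : Fin n) → B i) → ℝ) : ℝ :=
  (1 / 2) * ∑ a : Bool, ∑ y, β (Bool.xor a c) y * fid (fun x => sF a x y) (α a)

/-- Objective value of cheating Bob forcing outcome `c` in the classical protocol. -/
noncomputable def bobObjC (A B : Fin n → Type) [∀ i, Fintype (A i)] [∀ i, Fintype (B i)]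
    (hn : 0 < n) (α : Bool → ((i : Fin n) → A i) → ℝ)
    (β : Bool → ((i : Fin n) → B i) → ℝ) (c : Bool)
    (p : Fin n → ((i : Fin n) → A i) → ((i : Fin n) → B i) → ℝ) : ℝ :=
  (1 / 2) * ∑ a : Bool, ∑ y ∈ univ.filter (fun y => β (Bool.xor a c) y ≠ 0),
      ∑ x, α a x * p ⟨n - 1, Nat.sub_lt hn Nat.one_pos⟩ x y

/-- Objective value of cheating Alice forcing outcome `c` in the classical protocol. -/
noncomputable def aliceObjC (A B : Fin n → Type) [∀ i, Fintype (A i)] [∀ i, Fintype (B i)]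
    (α : Bool → ((i : Fin n) → A i) → ℝ)
    (β : Bool → ((i : Fin n) → B i) → ℝ) (c : Bool)
    (sF : Bool → ((i : Fin n) → A i) → ((i : Fin n) → B i) → ℝ) : ℝ :=
  (1 / 2) * ∑ a : Bool, ∑ y, β (Bool.xor a c) y *
      ∑ x ∈ univ.filter (fun x => α a x ≠ 0), sF a x y

/-- The set of values of cheating Bob's quantum strategies for outcome `c`. -/
def bobValsQ (A B : Fin n → Type) [∀ i, Fintype (A i)] [∀ i, Fintype (B i)]
    (hn : 0 < n) (α : Bool → ((i : Fin n) → A i) → ℝ)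
    (β : Bool → ((i : Fin n) → B i) → ℝ) (c : Bool) : Set ℝ :=
  {v | ∃ p, MemBob A B p ∧ v = bobObjQ A B hn α β c p}

/-- The set of values of cheating Alice's quantum strategies for outcome `c`. -/
def aliceValsQ (A B : Fin n → Type) [∀ i, Fintype (A i)] [∀ i, Fintype (B i)]
    (hn : 0 < n) (α : Bool → ((i : Fin n) → A i) → ℝ)
    (β : Bool → ((i : Fin n) → B i) → ℝ) (c : Bool) : Set ℝ :=
  {v | ∃ s sF, MemAlice A B hn s sF ∧ v = aliceObjQ A B α β c sF}

/-- The set of values of cheating Bob's classical strategies for outcome `c`. -/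
def bobValsC (A B : Fin n → Type) [∀ i, Fintype (A i)] [∀ i, Fintype (B i)]
    (hn : 0 < n) (α : Bool → ((i : Fin n) → A i) → ℝ)
    (β : Bool → ((i : Fin n) → B i) → ℝ) (c : Bool) : Set ℝ :=
  {v | ∃ p, MemBob A B p ∧ v = bobObjC A B hn α β c p}

/-- The set of values of cheating Alice's classical strategies for outcome `c`. -/
def aliceValsC (A B : Fin n → Type) [∀ i, Fintype (A i)] [∀ i, Fintype (B i)]
    (hn : 0 < n) (α : Bool → ((i : Fin n) → A i) → ℝ)
    (β : Bool → ((i : Fin n) → B i) → ℝ) (c : Bool) : Set ℝ :=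
  {v | ∃ s sF, MemAlice A B hn s sF ∧ v = aliceObjC A B α β c sF}

end BCCF

set_option linter.unusedSectionVars false
set_option maxHeartbeats 1000000

namespace BCCF2

lemma sum_update_eq_card_mul {ι : Type} [Fintype ι] [DecidableEq ι] (G : ι → Type)
    [∀ i, Fintype (G i)] (j : ι) (F : ((i : ι) → G i) → ℝ) :
    ∑ x : (i : ι) → G i, ∑ a : G j, F (Function.update x j a)
      = (Fintype.card (G j) : ℝ) * ∑ x, F x := by
  classical
  set e := Equiv.piSplitAt j G with he
  have key : ∀ (x : (i : ι) → G i) (a : G j),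
      Function.update x j a = e.symm (a, (e x).2) := by
    intro x a
    funext k
    rw [Equiv.piSplitAt_symm_apply]
    by_cases h : k = j
    · subst h; simp
    · simp [Function.update, h, he, Equiv.piSplitAt]
  calc ∑ x : (i : ι) → G i, ∑ a : G j, F (Function.update x j a)
      = ∑ q : G j × ((i : {i // i ≠ j}) → G i), ∑ a : G j, F (e.symm (a, q.2)) := by
        rw [← Equiv.sum_comp e.symm (fun x => ∑ a : G j, F (Function.update x j a))]
        refine Finset.sum_congr rfl fun q _ => Finset.sum_congr rfl fun a _ => ?_
        rw [key]
        simp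
    _ = ∑ a₀ : G j, ∑ t : (i : {i // i ≠ j}) → G ↑i, ∑ a : G j, F (e.symm (a, t)) := by
        rw [Fintype.sum_prod_type]
    _ = (Fintype.card (G j) : ℝ) * ∑ q : G j × ((i : {i // i ≠ j}) → G ↑i), F (e.symm q) := by
        rw [Finset.sum_const, card_univ, nsmul_eq_mul, Fintype.sum_prod_type]
        congr 1
        exact Finset.sum_comm
    _ = (Fintype.card (G j) : ℝ) * ∑ x, F x := by
        rw [Equiv.sum_comp e.symm F]

variable {n : ℕ}

def idx (hn : 0 < n) (r : ℕ) : Fin n := ⟨n - 1 - r, by omega⟩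

section Bob

variable (hn : 0 < n) (A B : Fin n → Type) [∀ i, Fintype (A i)] [∀ i, Nonempty (A i)]
  [∀ i, Fintype (B i)] [∀ i, Nonempty (B i)]

/-- Bob's value function: `gB w r` is the optimal-to-go value with `r` rounds resolved
from the end. -/
noncomputable def gB (w : ((i : Fin n) → A i) → ((i : Fin n) → B i) → ℝ) :
    ℕ → ((i : Fin n) → A i) → ((i : Fin n) → B i) → ℝ
  | 0 => w
  | (r + 1) => fun x y =>
      ∑ a : A (idx hn r), (univ.sup' univ_nonempty fun b : B (idx hn r) =>
        gB w r (Function.update x (idx hn r) a) (Function.update y (idx hn r) b))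

lemma gB_nonneg {w} (hw : ∀ x y, 0 ≤ w x y) : ∀ r x y, 0 ≤ gB hn A B w r x y := by
  intro r
  induction r with
  | zero => exact hw
  | succ r ih =>
      intro x y
      apply Finset.sum_nonneg
      intro a _
      have h2 := Finset.le_sup' (fun b : B (idx hn r) =>
        gB hn A B w r (Function.update x (idx hn r) a) (Function.update y (idx hn r) b))
        (Finset.mem_univ (Classical.arbitrary (B (idx hn r))))
      exact le_trans (ih _ _) h2

lemma gB_dep {w} : ∀ r, r ≤ n → ∀ x x' y y',
    (∀ i : Fin n, (i : ℕ) < n - r → x i = x' i) →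
    (∀ i : Fin n, (i : ℕ) < n - r → y i = y' i) →
    gB hn A B w r x y = gB hn A B w r x' y' := by
  intro r
  induction r with
  | zero =>
      intro _ x x' y y' hx hy
      have hx' : x = x' := funext fun i => hx i (by omega)
      have hy' : y = y' := funext fun i => hy i (by omega)
      rw [hx', hy']
  | succ r ih =>
      intro hr x x' y y' hx hy
      show (∑ a : A (idx hn r), _) = _
      refine Finset.sum_congr rfl fun a _ => ?_
      refine Finset.sup'_congr _ rfl fun b _ => ?_
      refine ih (by omega) _ _ _ _ ?_ ?_
      · intro i hi
        by_cases h : i = idx hn r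
        · subst h; simp
        · have : (i : ℕ) ≠ n - 1 - r := fun hc => h (Fin.ext hc)
          rw [Function.update_of_ne h, Function.update_of_ne h]
          exact hx i (by omega)
      · intro i hi
        by_cases h : i = idx hn r
        · subst h; simp
        · have : (i : ℕ) ≠ n - 1 - r := fun hc => h (Fin.ext hc)
          rw [Function.update_of_ne h, Function.update_of_ne h]
          exact hy i (by omega)

lemma gB_const {w} (x x' y y') : gB hn A B w n x y = gB hn A B w n x' y' :=
  gB_dep hn A B n le_rfl x x' y y' (fun i hi => absurd hi (by omega))
    (fun i hi => absurd hi (by omega))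


/-- Marginal chain for Bob: `PB p r` is the strategy marginal paired with `gB w r`. -/
noncomputable def PB (p : Fin n → ((i : Fin n) → A i) → ((i : Fin n) → B i) → ℝ)
    (r : ℕ) : ((i : Fin n) → A i) → ((i : Fin n) → B i) → ℝ :=
  if h : r < n then p (idx hn r) else fun _ _ => 1

variable (p : Fin n → ((i : Fin n) → A i) → ((i : Fin n) → B i) → ℝ)

lemma PB_lt {r : ℕ} (h : r < n) : PB hn A B p r = p (idx hn r) := dif_pos h

lemma PB_ge {r : ℕ} (h : ¬ r < n) : PB hn A B p r = fun _ _ => 1 := dif_neg h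

lemma PB_nonneg (hp0 : ∀ j x y, 0 ≤ p j x y) (r : ℕ) (x y) : 0 ≤ PB hn A B p r x y := by
  unfold PB
  split
  · exact hp0 _ _ _
  · exact zero_le_one

lemma PB_marg
    (hbase : ∀ j : Fin n, (j : ℕ) = 0 → ∀ x y, ∑ b : B j, p j x (Function.update y j b) = 1)
    (hmarg : ∀ j k : Fin n, (j : ℕ) = (k : ℕ) + 1 → ∀ x y,
      ∑ b : B j, p j x (Function.update y j b) = p k x y)
    (r : ℕ) (hr : r + 1 ≤ n) (x y) :
    ∑ b : B (idx hn r), p (idx hn r) x (Function.update y (idx hn r) b)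
      = PB hn A B p (r + 1) x y := by
  by_cases h : r + 1 < n
  · rw [PB_lt hn A B p h]
    exact hmarg (idx hn r) (idx hn (r + 1)) (by simp [idx]; omega) x y
  · rw [PB_ge hn A B p h]
    exact hbase (idx hn r) (by simp [idx]; omega) x y

lemma PB_dep
    (hdep : ∀ (j : Fin n) x x' y y',
      (∀ i, i ≤ j → x i = x' i) → (∀ i, i ≤ j → y i = y' i) → p j x y = p j x' y')
    (r : ℕ) (hr : r + 1 ≤ n) (x y) (a : A (idx hn r)) :
    PB hn A B p (r + 1) (Function.update x (idx hn r) a) y = PB hn A B p (r + 1) x y := by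
  by_cases h : r + 1 < n
  · rw [PB_lt hn A B p h]
    refine hdep (idx hn (r + 1)) _ _ _ _ ?_ (fun i _ => rfl)
    intro i hi
    have hne : i ≠ idx hn r := by
      intro hc
      subst hc
      simp only [idx] at hi
      have : n - 1 - r ≤ n - 1 - (r + 1) := hi
      omega
    exact Function.update_of_ne hne _ _
  · rw [PB_ge hn A B p h]

lemma stepB_le (w) (hp0 : ∀ j x y, 0 ≤ p j x y)
    (hdep : ∀ (j : Fin n) x x' y y',
      (∀ i, i ≤ j → x i = x' i) → (∀ i, i ≤ j → y i = y' i) → p j x y = p j x' y')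
    (hbase : ∀ j : Fin n, (j : ℕ) = 0 → ∀ x y, ∑ b : B j, p j x (Function.update y j b) = 1)
    (hmarg : ∀ j k : Fin n, (j : ℕ) = (k : ℕ) + 1 → ∀ x y,
      ∑ b : B j, p j x (Function.update y j b) = p k x y)
    (r : ℕ) (hr : r + 1 ≤ n) :
    ((Fintype.card (A (idx hn r)) : ℝ) * (Fintype.card (B (idx hn r)) : ℝ)) *
      (∑ x, ∑ y, gB hn A B w r x y * PB hn A B p r x y)
    ≤ ∑ x, ∑ y, gB hn A B w (r + 1) x y * PB hn A B p (r + 1) x y := by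
  classical
  set j := idx hn r with hj
  have hrn : r < n := by omega
  have expand :
      ((Fintype.card (A j) : ℝ) * (Fintype.card (B j) : ℝ)) *
        (∑ x, ∑ y, gB hn A B w r x y * PB hn A B p r x y)
      = ∑ x, ∑ y, ∑ a : A j, ∑ b : B j,
          gB hn A B w r (Function.update x j a) (Function.update y j b) *
            p j (Function.update x j a) (Function.update y j b) := by
    rw [PB_lt hn A B p hrn, ← hj]
    have step1 : ∀ x : (i : Fin n) → A i,
        (Fintype.card (B j) : ℝ) * ∑ y, gB hn A B w r x y * p j x y
        = ∑ y, ∑ b : B j, gB hn A B w r x (Function.update y j b) *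
            p j x (Function.update y j b) := by
      intro x
      rw [← sum_update_eq_card_mul B j (fun y => gB hn A B w r x y * p j x y)]
    have step2 :
        (Fintype.card (A j) : ℝ) * ∑ x, (∑ y, ∑ b : B j,
            gB hn A B w r x (Function.update y j b) * p j x (Function.update y j b))
        = ∑ x, ∑ a : A j, ∑ y, ∑ b : B j,
            gB hn A B w r (Function.update x j a) (Function.update y j b) *
              p j (Function.update x j a) (Function.update y j b) := by
      rw [← sum_update_eq_card_mul A j (fun x => ∑ y, ∑ b : B j,
            gB hn A B w r x (Function.update y j b) * p j x (Function.update y j b))]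
    calc ((Fintype.card (A j) : ℝ) * (Fintype.card (B j) : ℝ)) *
          (∑ x, ∑ y, gB hn A B w r x y * p j x y)
        = (Fintype.card (A j) : ℝ) * ∑ x, ((Fintype.card (B j) : ℝ) *
            ∑ y, gB hn A B w r x y * p j x y) := by
          rw [Finset.mul_sum, Finset.mul_sum]
          exact Finset.sum_congr rfl fun x _ => mul_assoc _ _ _
      _ = (Fintype.card (A j) : ℝ) * ∑ x, (∑ y, ∑ b : B j,
            gB hn A B w r x (Function.update y j b) * p j x (Function.update y j b)) := by
          congr 1; exact Finset.sum_congr rfl fun x _ => step1 x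
      _ = ∑ x, ∑ a : A j, ∑ y, ∑ b : B j,
            gB hn A B w r (Function.update x j a) (Function.update y j b) *
              p j (Function.update x j a) (Function.update y j b) := step2
      _ = ∑ x, ∑ y, ∑ a : A j, ∑ b : B j,
            gB hn A B w r (Function.update x j a) (Function.update y j b) *
              p j (Function.update x j a) (Function.update y j b) := by
          exact Finset.sum_congr rfl fun x _ => Finset.sum_comm
  rw [expand]
  refine Finset.sum_le_sum fun x _ => Finset.sum_le_sum fun y _ => ?_
  -- inner bound
  have inner : ∀ a : A j,
      ∑ b : B j, gB hn A B w r (Function.update x j a) (Function.update y j b) *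
          p j (Function.update x j a) (Function.update y j b)
      ≤ (univ.sup' univ_nonempty fun b : B j =>
          gB hn A B w r (Function.update x j a) (Function.update y j b)) *
          PB hn A B p (r + 1) x y := by
    intro a
    have h1 : ∑ b : B j, gB hn A B w r (Function.update x j a) (Function.update y j b) *
          p j (Function.update x j a) (Function.update y j b)
        ≤ ∑ b : B j, (univ.sup' univ_nonempty fun b : B j =>
            gB hn A B w r (Function.update x j a) (Function.update y j b)) *
            p j (Function.update x j a) (Function.update y j b) := by
      refine Finset.sum_le_sum fun b _ => ?_
      exact mul_le_mul_of_nonneg_right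
        (Finset.le_sup' (fun b : B j =>
          gB hn A B w r (Function.update x j a) (Function.update y j b)) (Finset.mem_univ b))
        (hp0 _ _ _)
    rw [← Finset.mul_sum] at h1
    rw [PB_marg hn A B p hbase hmarg r hr (Function.update x j a) y] at h1
    rw [PB_dep hn A B p hdep r hr x y a] at h1
    exact h1
  calc ∑ a : A j, ∑ b : B j,
        gB hn A B w r (Function.update x j a) (Function.update y j b) *
          p j (Function.update x j a) (Function.update y j b)
      ≤ ∑ a : A j, (univ.sup' univ_nonempty fun b : B j =>
          gB hn A B w r (Function.update x j a) (Function.update y j b)) *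
          PB hn A B p (r + 1) x y := Finset.sum_le_sum fun a _ => inner a
    _ = gB hn A B w (r + 1) x y * PB hn A B p (r + 1) x y := by
        rw [← Finset.sum_mul]
        rfl


lemma stepB_eq (w) (hp0 : ∀ j x y, 0 ≤ p j x y)
    (hdep : ∀ (j : Fin n) x x' y y',
      (∀ i, i ≤ j → x i = x' i) → (∀ i, i ≤ j → y i = y' i) → p j x y = p j x' y')
    (hbase : ∀ j : Fin n, (j : ℕ) = 0 → ∀ x y, ∑ b : B j, p j x (Function.update y j b) = 1)
    (hmarg : ∀ j k : Fin n, (j : ℕ) = (k : ℕ) + 1 → ∀ x y,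
      ∑ b : B j, p j x (Function.update y j b) = p k x y)
    (r : ℕ) (hr : r + 1 ≤ n)
    (halign : ∀ x y (b : B (idx hn r)), p (idx hn r) x (Function.update y (idx hn r) b) ≠ 0 →
      gB hn A B w r x (Function.update y (idx hn r) b)
        = univ.sup' univ_nonempty (fun b' : B (idx hn r) =>
            gB hn A B w r x (Function.update y (idx hn r) b'))) :
    ((Fintype.card (A (idx hn r)) : ℝ) * (Fintype.card (B (idx hn r)) : ℝ)) *
      (∑ x, ∑ y, gB hn A B w r x y * PB hn A B p r x y)
    = ∑ x, ∑ y, gB hn A B w (r + 1) x y * PB hn A B p (r + 1) x y := by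
  classical
  set j := idx hn r with hj
  have hrn : r < n := by omega
  have expand :
      ((Fintype.card (A j) : ℝ) * (Fintype.card (B j) : ℝ)) *
        (∑ x, ∑ y, gB hn A B w r x y * PB hn A B p r x y)
      = ∑ x, ∑ y, ∑ a : A j, ∑ b : B j,
          gB hn A B w r (Function.update x j a) (Function.update y j b) *
            p j (Function.update x j a) (Function.update y j b) := by
    rw [PB_lt hn A B p hrn, ← hj]
    have step1 : ∀ x : (i : Fin n) → A i,
        (Fintype.card (B j) : ℝ) * ∑ y, gB hn A B w r x y * p j x y
        = ∑ y, ∑ b : B j, gB hn A B w r x (Function.update y j b) *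
            p j x (Function.update y j b) := by
      intro x
      rw [← sum_update_eq_card_mul B j (fun y => gB hn A B w r x y * p j x y)]
    have step2 :
        (Fintype.card (A j) : ℝ) * ∑ x, (∑ y, ∑ b : B j,
            gB hn A B w r x (Function.update y j b) * p j x (Function.update y j b))
        = ∑ x, ∑ a : A j, ∑ y, ∑ b : B j,
            gB hn A B w r (Function.update x j a) (Function.update y j b) *
              p j (Function.update x j a) (Function.update y j b) := by
      rw [← sum_update_eq_card_mul A j (fun x => ∑ y, ∑ b : B j,
            gB hn A B w r x (Function.update y j b) * p j x (Function.update y j b))]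
    calc ((Fintype.card (A j) : ℝ) * (Fintype.card (B j) : ℝ)) *
          (∑ x, ∑ y, gB hn A B w r x y * p j x y)
        = (Fintype.card (A j) : ℝ) * ∑ x, ((Fintype.card (B j) : ℝ) *
            ∑ y, gB hn A B w r x y * p j x y) := by
          rw [Finset.mul_sum, Finset.mul_sum]
          exact Finset.sum_congr rfl fun x _ => mul_assoc _ _ _
      _ = (Fintype.card (A j) : ℝ) * ∑ x, (∑ y, ∑ b : B j,
            gB hn A B w r x (Function.update y j b) * p j x (Function.update y j b)) := by
          congr 1; exact Finset.sum_congr rfl fun x _ => step1 x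
      _ = ∑ x, ∑ a : A j, ∑ y, ∑ b : B j,
            gB hn A B w r (Function.update x j a) (Function.update y j b) *
              p j (Function.update x j a) (Function.update y j b) := step2
      _ = ∑ x, ∑ y, ∑ a : A j, ∑ b : B j,
            gB hn A B w r (Function.update x j a) (Function.update y j b) *
              p j (Function.update x j a) (Function.update y j b) := by
          exact Finset.sum_congr rfl fun x _ => Finset.sum_comm
  rw [expand]
  refine Finset.sum_congr rfl fun x _ => Finset.sum_congr rfl fun y _ => ?_
  have inner : ∀ a : A j,
      ∑ b : B j, gB hn A B w r (Function.update x j a) (Function.update y j b) *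
          p j (Function.update x j a) (Function.update y j b)
      = (univ.sup' univ_nonempty fun b : B j =>
          gB hn A B w r (Function.update x j a) (Function.update y j b)) *
          PB hn A B p (r + 1) x y := by
    intro a
    have h1 : ∑ b : B j, gB hn A B w r (Function.update x j a) (Function.update y j b) *
          p j (Function.update x j a) (Function.update y j b)
        = ∑ b : B j, (univ.sup' univ_nonempty fun b : B j =>
            gB hn A B w r (Function.update x j a) (Function.update y j b)) *
            p j (Function.update x j a) (Function.update y j b) := by
      refine Finset.sum_congr rfl fun b _ => ?_
      by_cases hz : p j (Function.update x j a) (Function.update y j b) = 0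
      · rw [hz, mul_zero, mul_zero]
      · rw [halign (Function.update x j a) y b hz]
    rw [h1, ← Finset.mul_sum,
      PB_marg hn A B p hbase hmarg r hr (Function.update x j a) y,
      PB_dep hn A B p hdep r hr x y a]
  calc ∑ a : A j, ∑ b : B j,
        gB hn A B w r (Function.update x j a) (Function.update y j b) *
          p j (Function.update x j a) (Function.update y j b)
      = ∑ a : A j, (univ.sup' univ_nonempty fun b : B j =>
          gB hn A B w r (Function.update x j a) (Function.update y j b)) *
          PB hn A B p (r + 1) x y := Finset.sum_congr rfl fun a _ => inner a
    _ = gB hn A B w (r + 1) x y * PB hn A B p (r + 1) x y := by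
        rw [← Finset.sum_mul]
        rfl


lemma prod_cards :
    (∏ k ∈ Finset.range n, ((Fintype.card (A (idx hn k)) : ℝ) *
      (Fintype.card (B (idx hn k)) : ℝ)))
    = (Fintype.card ((i : Fin n) → A i) : ℝ) * (Fintype.card ((i : Fin n) → B i) : ℝ) := by
  classical
  rw [Finset.prod_mul_distrib]
  have gen : ∀ (G : Fin n → Type) (_ : ∀ i, Fintype (G i)),
      (∏ k ∈ Finset.range n, (Fintype.card (G (idx hn k)) : ℝ))
        = (Fintype.card ((i : Fin n) → G i) : ℝ) := by
    intro G hG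
    set f : ℕ → ℝ := fun k => if h : k < n then (Fintype.card (G ⟨k, h⟩) : ℝ) else 1 with hf
    have h1 : ∀ k ∈ Finset.range n, (Fintype.card (G (idx hn k)) : ℝ) = f (n - 1 - k) := by
      intro k hk
      have hlt : n - 1 - k < n := by omega
      simp only [hf]
      rw [dif_pos hlt]
      rfl
    rw [Finset.prod_congr rfl h1, Finset.prod_range_reflect f n,
      ← Fin.prod_univ_eq_prod_range f n]
    have h2 : ∀ i : Fin n, f ↑i = (Fintype.card (G i) : ℝ) := by
      intro i
      simp only [hf]
      rw [dif_pos i.isLt]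
    rw [Finset.prod_congr rfl fun i _ => h2 i, Fintype.card_pi, Nat.cast_prod]
  rw [gen A inferInstance, gen B inferInstance]

/-- The optimal value for Bob. -/
noncomputable def VB (w : ((i : Fin n) → A i) → ((i : Fin n) → B i) → ℝ) : ℝ :=
  gB hn A B w n (Classical.arbitrary _) (Classical.arbitrary _)

lemma snB (w) : ∑ x, ∑ y, gB hn A B w n x y * PB hn A B p n x y
    = (Fintype.card ((i : Fin n) → A i) : ℝ) * (Fintype.card ((i : Fin n) → B i) : ℝ) *
      VB hn A B w := by
  rw [PB_ge hn A B p (lt_irrefl n)]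
  have : ∀ x y, gB hn A B w n x y = VB hn A B w := fun x y => gB_const hn A B x _ y _
  calc ∑ x, ∑ y, gB hn A B w n x y * (1 : ℝ)
      = ∑ _x : (i : Fin n) → A i, ∑ _y : (i : Fin n) → B i, VB hn A B w := by
        exact Finset.sum_congr rfl fun x _ => Finset.sum_congr rfl fun y _ => by
          rw [this x y, mul_one]
    _ = (Fintype.card ((i : Fin n) → A i) : ℝ) * (Fintype.card ((i : Fin n) → B i) : ℝ) *
        VB hn A B w := by
        rw [Finset.sum_const, Finset.sum_const, card_univ, card_univ, nsmul_eq_mul,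
          nsmul_eq_mul]
        ring

lemma cardsfactor_pos (r : ℕ) : (0:ℝ) <
    ((Fintype.card (A (idx hn r)) : ℝ) * (Fintype.card (B (idx hn r)) : ℝ)) := by
  have h1 : 0 < Fintype.card (A (idx hn r)) := Fintype.card_pos
  have h2 : 0 < Fintype.card (B (idx hn r)) := Fintype.card_pos
  positivity

lemma teleB_le (w) (hp0 : ∀ j x y, 0 ≤ p j x y)
    (hdep : ∀ (j : Fin n) x x' y y',
      (∀ i, i ≤ j → x i = x' i) → (∀ i, i ≤ j → y i = y' i) → p j x y = p j x' y')
    (hbase : ∀ j : Fin n, (j : ℕ) = 0 → ∀ x y, ∑ b : B j, p j x (Function.update y j b) = 1)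
    (hmarg : ∀ j k : Fin n, (j : ℕ) = (k : ℕ) + 1 → ∀ x y,
      ∑ b : B j, p j x (Function.update y j b) = p k x y) :
    ∀ r, r ≤ n →
      (∏ k ∈ Finset.range r, ((Fintype.card (A (idx hn k)) : ℝ) *
        (Fintype.card (B (idx hn k)) : ℝ))) *
        (∑ x, ∑ y, gB hn A B w 0 x y * PB hn A B p 0 x y)
      ≤ ∑ x, ∑ y, gB hn A B w r x y * PB hn A B p r x y := by
  intro r
  induction r with
  | zero => intro _; rw [Finset.prod_range_zero, one_mul]
  | succ r ih =>
      intro hr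
      have ihr := ih (by omega)
      rw [Finset.prod_range_succ]
      calc (∏ k ∈ Finset.range r, ((Fintype.card (A (idx hn k)) : ℝ) *
            (Fintype.card (B (idx hn k)) : ℝ))) *
            ((Fintype.card (A (idx hn r)) : ℝ) * (Fintype.card (B (idx hn r)) : ℝ)) *
            (∑ x, ∑ y, gB hn A B w 0 x y * PB hn A B p 0 x y)
          = ((Fintype.card (A (idx hn r)) : ℝ) * (Fintype.card (B (idx hn r)) : ℝ)) *
            ((∏ k ∈ Finset.range r, ((Fintype.card (A (idx hn k)) : ℝ) *
              (Fintype.card (B (idx hn k)) : ℝ))) *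
              (∑ x, ∑ y, gB hn A B w 0 x y * PB hn A B p 0 x y)) := by ring
        _ ≤ ((Fintype.card (A (idx hn r)) : ℝ) * (Fintype.card (B (idx hn r)) : ℝ)) *
            (∑ x, ∑ y, gB hn A B w r x y * PB hn A B p r x y) :=
            mul_le_mul_of_nonneg_left ihr (le_of_lt (cardsfactor_pos hn A B r))
        _ ≤ ∑ x, ∑ y, gB hn A B w (r + 1) x y * PB hn A B p (r + 1) x y :=
            stepB_le hn A B p w hp0 hdep hbase hmarg r hr

lemma teleB_eq (w) (hp0 : ∀ j x y, 0 ≤ p j x y)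
    (hdep : ∀ (j : Fin n) x x' y y',
      (∀ i, i ≤ j → x i = x' i) → (∀ i, i ≤ j → y i = y' i) → p j x y = p j x' y')
    (hbase : ∀ j : Fin n, (j : ℕ) = 0 → ∀ x y, ∑ b : B j, p j x (Function.update y j b) = 1)
    (hmarg : ∀ j k : Fin n, (j : ℕ) = (k : ℕ) + 1 → ∀ x y,
      ∑ b : B j, p j x (Function.update y j b) = p k x y)
    (halign : ∀ r, r + 1 ≤ n → ∀ x y (b : B (idx hn r)),
      p (idx hn r) x (Function.update y (idx hn r) b) ≠ 0 →
      gB hn A B w r x (Function.update y (idx hn r) b)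
        = univ.sup' univ_nonempty (fun b' : B (idx hn r) =>
            gB hn A B w r x (Function.update y (idx hn r) b'))) :
    ∀ r, r ≤ n →
      (∏ k ∈ Finset.range r, ((Fintype.card (A (idx hn k)) : ℝ) *
        (Fintype.card (B (idx hn k)) : ℝ))) *
        (∑ x, ∑ y, gB hn A B w 0 x y * PB hn A B p 0 x y)
      = ∑ x, ∑ y, gB hn A B w r x y * PB hn A B p r x y := by
  intro r
  induction r with
  | zero => intro _; rw [Finset.prod_range_zero, one_mul]
  | succ r ih =>
      intro hr
      have ihr := ih (by omega)
      rw [Finset.prod_range_succ]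
      calc (∏ k ∈ Finset.range r, ((Fintype.card (A (idx hn k)) : ℝ) *
            (Fintype.card (B (idx hn k)) : ℝ))) *
            ((Fintype.card (A (idx hn r)) : ℝ) * (Fintype.card (B (idx hn r)) : ℝ)) *
            (∑ x, ∑ y, gB hn A B w 0 x y * PB hn A B p 0 x y)
          = ((Fintype.card (A (idx hn r)) : ℝ) * (Fintype.card (B (idx hn r)) : ℝ)) *
            ((∏ k ∈ Finset.range r, ((Fintype.card (A (idx hn k)) : ℝ) *
              (Fintype.card (B (idx hn k)) : ℝ))) *
              (∑ x, ∑ y, gB hn A B w 0 x y * PB hn A B p 0 x y)) := by ring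
        _ = ((Fintype.card (A (idx hn r)) : ℝ) * (Fintype.card (B (idx hn r)) : ℝ)) *
            (∑ x, ∑ y, gB hn A B w r x y * PB hn A B p r x y) := by rw [ihr]
        _ = ∑ x, ∑ y, gB hn A B w (r + 1) x y * PB hn A B p (r + 1) x y :=
            stepB_eq hn A B p w hp0 hdep hbase hmarg r hr (halign r hr)

lemma bob_le (w) (hp0 : ∀ j x y, 0 ≤ p j x y)
    (hdep : ∀ (j : Fin n) x x' y y',
      (∀ i, i ≤ j → x i = x' i) → (∀ i, i ≤ j → y i = y' i) → p j x y = p j x' y')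
    (hbase : ∀ j : Fin n, (j : ℕ) = 0 → ∀ x y, ∑ b : B j, p j x (Function.update y j b) = 1)
    (hmarg : ∀ j k : Fin n, (j : ℕ) = (k : ℕ) + 1 → ∀ x y,
      ∑ b : B j, p j x (Function.update y j b) = p k x y) :
    ∑ x, ∑ y, gB hn A B w 0 x y * PB hn A B p 0 x y ≤ VB hn A B w := by
  have h := teleB_le hn A B p w hp0 hdep hbase hmarg n le_rfl
  rw [snB hn A B p w, prod_cards hn A B] at h
  have hpos : (0:ℝ) < (Fintype.card ((i : Fin n) → A i) : ℝ) *
      (Fintype.card ((i : Fin n) → B i) : ℝ) := by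
    have h1 : 0 < Fintype.card ((i : Fin n) → A i) := Fintype.card_pos
    have h2 : 0 < Fintype.card ((i : Fin n) → B i) := Fintype.card_pos
    positivity
  exact le_of_mul_le_mul_left h hpos

lemma bob_eq (w) (hp0 : ∀ j x y, 0 ≤ p j x y)
    (hdep : ∀ (j : Fin n) x x' y y',
      (∀ i, i ≤ j → x i = x' i) → (∀ i, i ≤ j → y i = y' i) → p j x y = p j x' y')
    (hbase : ∀ j : Fin n, (j : ℕ) = 0 → ∀ x y, ∑ b : B j, p j x (Function.update y j b) = 1)
    (hmarg : ∀ j k : Fin n, (j : ℕ) = (k : ℕ) + 1 → ∀ x y,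
      ∑ b : B j, p j x (Function.update y j b) = p k x y)
    (halign : ∀ r, r + 1 ≤ n → ∀ x y (b : B (idx hn r)),
      p (idx hn r) x (Function.update y (idx hn r) b) ≠ 0 →
      gB hn A B w r x (Function.update y (idx hn r) b)
        = univ.sup' univ_nonempty (fun b' : B (idx hn r) =>
            gB hn A B w r x (Function.update y (idx hn r) b'))) :
    ∑ x, ∑ y, gB hn A B w 0 x y * PB hn A B p 0 x y = VB hn A B w := by
  have h := teleB_eq hn A B p w hp0 hdep hbase hmarg halign n le_rfl
  rw [snB hn A B p w, prod_cards hn A B] at h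
  have hpos : (0:ℝ) < (Fintype.card ((i : Fin n) → A i) : ℝ) *
      (Fintype.card ((i : Fin n) → B i) : ℝ) := by
    have h1 : 0 < Fintype.card ((i : Fin n) → A i) := Fintype.card_pos
    have h2 : 0 < Fintype.card ((i : Fin n) → B i) := Fintype.card_pos
    positivity
  exact mul_left_cancel₀ (ne_of_gt hpos) h


/-- Truncation keeping coordinates `≤ i`. -/
noncomputable def truncLe (C : Fin n → Type) [∀ i, Nonempty (C i)]
    (i : Fin n) (x : (k : Fin n) → C k) : (k : Fin n) → C k :=
  fun k => if k ≤ i then x k else Classical.arbitrary (C k)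

/-- Truncation keeping coordinates `< i`. -/
noncomputable def truncLt (C : Fin n → Type) [∀ i, Nonempty (C i)]
    (i : Fin n) (x : (k : Fin n) → C k) : (k : Fin n) → C k :=
  fun k => if k < i then x k else Classical.arbitrary (C k)

lemma exB (w) (i : Fin n) (x : (k : Fin n) → A k) (y : (k : Fin n) → B k) :
    ∃ b : B i, univ.sup' univ_nonempty
        (fun b' : B i => gB hn A B w (n - 1 - (i : ℕ)) x (Function.update y i b'))
      = gB hn A B w (n - 1 - (i : ℕ)) x (Function.update y i b) := by
  obtain ⟨b, _, hb⟩ := Finset.exists_mem_eq_sup' (univ_nonempty)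
    (fun b' : B i => gB hn A B w (n - 1 - (i : ℕ)) x (Function.update y i b'))
  exact ⟨b, hb⟩

/-- Bob's deterministic optimal choice in round `i`. -/
noncomputable def fB0 (w : ((i : Fin n) → A i) → ((i : Fin n) → B i) → ℝ) (i : Fin n) (x : (k : Fin n) → A k) (y : (k : Fin n) → B k) :
    B i :=
  Classical.choose (exB hn A B w i x y)

noncomputable def fB (w : ((i : Fin n) → A i) → ((i : Fin n) → B i) → ℝ) (i : Fin n) (x : (k : Fin n) → A k) (y : (k : Fin n) → B k) :
    B i :=
  fB0 hn A B w i (truncLe A i x) (truncLt B i y)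

lemma fB_congr (w) (i : Fin n) (x x' y y')
    (hx : ∀ k, k ≤ i → x k = x' k) (hy : ∀ k, k < i → y k = y' k) :
    fB hn A B w i x y = fB hn A B w i x' y' := by
  have h1 : truncLe A i x = truncLe A i x' := by
    funext k
    unfold truncLe
    split
    · exact hx k (by assumption)
    · rfl
  have h2 : truncLt B i y = truncLt B i y' := by
    funext k
    unfold truncLt
    split
    · exact hy k (by assumption)
    · rfl
  unfold fB
  rw [h1, h2]

lemma fB_spec (w) (i : Fin n) (x : (k : Fin n) → A k) (y : (k : Fin n) → B k) :
    univ.sup' univ_nonempty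
        (fun b' : B i => gB hn A B w (n - 1 - (i : ℕ)) x (Function.update y i b'))
      = gB hn A B w (n - 1 - (i : ℕ)) x (Function.update y i (fB hn A B w i x y)) := by
  have hb : univ.sup' univ_nonempty
      (fun b' : B i => gB hn A B w (n - 1 - (i : ℕ)) (truncLe A i x)
        (Function.update (truncLt B i y) i b'))
      = gB hn A B w (n - 1 - (i : ℕ)) (truncLe A i x)
        (Function.update (truncLt B i y) i (fB hn A B w i x y)) :=
    Classical.choose_spec (exB hn A B w i (truncLe A i x) (truncLt B i y))
  have key : ∀ b : B i,
      gB hn A B w (n - 1 - (i : ℕ)) (truncLe A i x)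
        (Function.update (truncLt B i y) i b)
      = gB hn A B w (n - 1 - (i : ℕ)) x (Function.update y i b) := by
    intro b
    refine gB_dep hn A B (n - 1 - (i : ℕ)) (by omega) _ _ _ _ ?_ ?_
    · intro k hk
      have hki : k ≤ i := by
        have := i.isLt
        have hk' : (k : ℕ) < n - (n - 1 - (i : ℕ)) := hk
        have : (k : ℕ) ≤ (i : ℕ) := by omega
        exact this
      unfold truncLe
      rw [if_pos hki]
    · intro k hk
      by_cases hki : k = i
      · subst hki; simp
      · have hlt : k < i := by
          have := i.isLt
          have hk' : (k : ℕ) < n - (n - 1 - (i : ℕ)) := hk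
          have h2 : k ≤ i := by rw [Fin.le_def]; omega
          exact lt_of_le_of_ne h2 hki
        rw [Function.update_of_ne hki, Function.update_of_ne hki]
        unfold truncLt
        rw [if_pos hlt]
  calc univ.sup' univ_nonempty
        (fun b' : B i => gB hn A B w (n - 1 - (i : ℕ)) x (Function.update y i b'))
      = univ.sup' univ_nonempty
        (fun b' : B i => gB hn A B w (n - 1 - (i : ℕ)) (truncLe A i x)
          (Function.update (truncLt B i y) i b')) := by
        refine Finset.sup'_congr _ rfl fun b _ => (key b).symm
    _ = gB hn A B w (n - 1 - (i : ℕ)) (truncLe A i x)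
          (Function.update (truncLt B i y) i (fB hn A B w i x y)) := hb
    _ = gB hn A B w (n - 1 - (i : ℕ)) x (Function.update y i (fB hn A B w i x y)) :=
        key _

open Classical in
/-- Bob's deterministic optimal strategy. -/
noncomputable def pdet (w : ((i : Fin n) → A i) → ((i : Fin n) → B i) → ℝ) (j : Fin n) (x : (k : Fin n) → A k) (y : (k : Fin n) → B k) :
    ℝ :=
  if (∀ i, i ≤ j → y i = fB hn A B w i x y) then 1 else 0

lemma pdet_01 (w) (j : Fin n) (x : (k : Fin n) → A k) (y : (k : Fin n) → B k) : pdet hn A B w j x y = 0 ∨ pdet hn A B w j x y = 1 := by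
  classical
  unfold pdet
  split
  · right; rfl
  · left; rfl

lemma pdet_nonneg (w) (j : Fin n) (x : (k : Fin n) → A k) (y : (k : Fin n) → B k) : 0 ≤ pdet hn A B w j x y := by
  rcases pdet_01 hn A B w j x y with h | h <;> rw [h] <;> norm_num

lemma pdet_dep (w) (j : Fin n) (x x' y y')
    (hx : ∀ i, i ≤ j → x i = x' i) (hy : ∀ i, i ≤ j → y i = y' i) :
    pdet hn A B w j x y = pdet hn A B w j x' y' := by
  classical
  unfold pdet
  refine if_congr ?_ rfl rfl
  constructor
  · intro h i hi
    rw [← hy i hi, ← fB_congr hn A B w i x x' y y'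
      (fun k hk => hx k (le_trans hk hi)) (fun k hk => hy k (le_trans (le_of_lt hk) hi))]
    exact h i hi
  · intro h i hi
    rw [hy i hi, fB_congr hn A B w i x x' y y'
      (fun k hk => hx k (le_trans hk hi)) (fun k hk => hy k (le_trans (le_of_lt hk) hi))]
    exact h i hi

lemma fB_update_self (w) (j : Fin n) (x : (k : Fin n) → A k) (y : (k : Fin n) → B k) (b : B j) :
    fB hn A B w j x (Function.update y j b) = fB hn A B w j x y :=
  fB_congr hn A B w j x x _ y (fun _ _ => rfl)
    (fun k hk => Function.update_of_ne (ne_of_lt hk) _ _)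

lemma pdet_cond_iff (w) (j k : Fin n) (hjk : (j : ℕ) = (k : ℕ) + 1) (x : (l : Fin n) → A l) (y : (l : Fin n) → B l) (b : B j) :
    (∀ i, i ≤ j → (Function.update y j b) i = fB hn A B w i x (Function.update y j b))
    ↔ ((∀ i, i ≤ k → y i = fB hn A B w i x y) ∧ b = fB hn A B w j x y) := by
  constructor
  · intro h
    constructor
    · intro i hi
      have hij : i < j := by
        rw [Fin.lt_def]; rw [Fin.le_def] at hi; omega
      have h1 := h i (le_of_lt hij)
      rw [Function.update_of_ne (ne_of_lt hij)] at h1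
      rw [h1]
      exact fB_congr hn A B w i x x _ y (fun _ _ => rfl)
        (fun l hl => Function.update_of_ne (ne_of_lt (lt_trans hl hij)) _ _)
    · have h1 := h j le_rfl
      rw [Function.update_self] at h1
      rw [h1]
      exact fB_update_self hn A B w j x y b
  · rintro ⟨h1, h2⟩ i hi
    by_cases hij : i = j
    · subst hij
      rw [Function.update_self, fB_update_self hn A B w i x y b]
      exact h2
    · have hij' : i < j := lt_of_le_of_ne hi hij
      have hik : i ≤ k := by
        rw [Fin.le_def]; rw [Fin.lt_def] at hij'; omega
      rw [Function.update_of_ne hij]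
      rw [fB_congr hn A B w i x x (Function.update y j b) y (fun _ _ => rfl)
        (fun l hl => Function.update_of_ne (ne_of_lt (lt_trans hl hij')) _ _)]
      exact h1 i hik

lemma pdet_base (w) (j : Fin n) (hj : (j : ℕ) = 0) (x : (l : Fin n) → A l) (y : (l : Fin n) → B l) :
    ∑ b : B j, pdet hn A B w j x (Function.update y j b) = 1 := by
  classical
  have hcond : ∀ b : B j,
      (∀ i, i ≤ j → (Function.update y j b) i = fB hn A B w i x (Function.update y j b))
      ↔ b = fB hn A B w j x y := by
    intro b
    constructor
    · intro h
      have h1 := h j le_rfl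
      rw [Function.update_self] at h1
      rw [h1]
      exact fB_update_self hn A B w j x y b
    · intro h i hi
      have hij : i = j := by
        apply Fin.ext
        rw [Fin.le_def, hj] at hi
        omega
      subst hij
      rw [Function.update_self, fB_update_self hn A B w i x y b]
      exact h
  calc ∑ b : B j, pdet hn A B w j x (Function.update y j b)
      = ∑ b : B j, if b = fB hn A B w j x y then (1:ℝ) else 0 := by
        refine Finset.sum_congr rfl fun b _ => ?_
        unfold pdet
        exact if_congr (hcond b) rfl rfl
    _ = 1 := by rw [Finset.sum_ite_eq' univ (fB hn A B w j x y) (fun _ => (1:ℝ)),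
          if_pos (Finset.mem_univ _)]

lemma pdet_marg (w) (j k : Fin n) (hjk : (j : ℕ) = (k : ℕ) + 1) (x : (l : Fin n) → A l) (y : (l : Fin n) → B l) :
    ∑ b : B j, pdet hn A B w j x (Function.update y j b) = pdet hn A B w k x y := by
  classical
  calc ∑ b : B j, pdet hn A B w j x (Function.update y j b)
      = ∑ b : B j, if ((∀ i, i ≤ k → y i = fB hn A B w i x y)
          ∧ b = fB hn A B w j x y) then (1:ℝ) else 0 := by
        refine Finset.sum_congr rfl fun b _ => ?_
        unfold pdet
        exact if_congr (pdet_cond_iff hn A B w j k hjk x y b) rfl rfl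
    _ = pdet hn A B w k x y := by
        by_cases hD : (∀ i, i ≤ k → y i = fB hn A B w i x y)
        · have : ∀ b : B j, (((∀ i, i ≤ k → y i = fB hn A B w i x y)
              ∧ b = fB hn A B w j x y) ↔ b = fB hn A B w j x y) := by
            intro b; constructor
            · exact fun h => h.2
            · exact fun h => ⟨hD, h⟩
          rw [Finset.sum_congr rfl fun b _ => if_congr (this b) rfl rfl]
          rw [Finset.sum_ite_eq' univ (fB hn A B w j x y) (fun _ => (1:ℝ)),
            if_pos (Finset.mem_univ _)]
          unfold pdet
          rw [if_pos hD]
        · have : ∀ b : B j, ¬((∀ i, i ≤ k → y i = fB hn A B w i x y)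
              ∧ b = fB hn A B w j x y) := fun b h => hD h.1
          rw [Finset.sum_congr rfl fun b _ => if_neg (this b)]
          rw [Finset.sum_const, smul_zero]
          unfold pdet
          rw [if_neg hD]

lemma pdet_align (w) : ∀ r, r + 1 ≤ n → ∀ x y (b : B (idx hn r)),
    pdet hn A B w (idx hn r) x (Function.update y (idx hn r) b) ≠ 0 →
    gB hn A B w r x (Function.update y (idx hn r) b)
      = univ.sup' univ_nonempty (fun b' : B (idx hn r) =>
          gB hn A B w r x (Function.update y (idx hn r) b')) := by
  classical
  intro r hr x y b hnz
  have hcond : ∀ i, i ≤ idx hn r →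
      (Function.update y (idx hn r) b) i
        = fB hn A B w i x (Function.update y (idx hn r) b) := by
    by_contra hc
    apply hnz
    unfold pdet
    rw [if_neg hc]
  have hb : b = fB hn A B w (idx hn r) x y := by
    have h1 := hcond (idx hn r) le_rfl
    rw [Function.update_self] at h1
    rw [h1]
    exact fB_update_self hn A B w (idx hn r) x y b
  have hjv : ((idx hn r : Fin n) : ℕ) = n - 1 - r := rfl
  have hrj : n - 1 - ((idx hn r : Fin n) : ℕ) = r := by rw [hjv]; omega
  have hspec := fB_spec hn A B w (idx hn r) x y
  rw [hrj] at hspec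
  rw [hb]
  exact hspec.symm

end Bob


section Alice

variable (hn : 0 < n) (A B : Fin n → Type) [∀ i, Fintype (A i)] [∀ i, Nonempty (A i)]
  [∀ i, Fintype (B i)] [∀ i, Nonempty (B i)]

/-- Alice's value function. -/
noncomputable def gA (w : ((i : Fin n) → A i) → ((i : Fin n) → B i) → ℝ) :
    ℕ → ((i : Fin n) → A i) → ((i : Fin n) → B i) → ℝ
  | 0 => w
  | (r + 1) => fun x y =>
      univ.sup' univ_nonempty (fun a : A (idx hn r) => ∑ b : B (idx hn r),
        gA w r (Function.update x (idx hn r) a) (Function.update y (idx hn r) b))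

lemma gA_dep {w} : ∀ r, r ≤ n → ∀ x x' y y',
    (∀ i : Fin n, (i : ℕ) < n - r → x i = x' i) →
    (∀ i : Fin n, (i : ℕ) < n - r → y i = y' i) →
    gA hn A B w r x y = gA hn A B w r x' y' := by
  intro r
  induction r with
  | zero =>
      intro _ x x' y y' hx hy
      have hx' : x = x' := funext fun i => hx i (by omega)
      have hy' : y = y' := funext fun i => hy i (by omega)
      rw [hx', hy']
  | succ r ih =>
      intro hr x x' y y' hx hy
      show (univ.sup' univ_nonempty (fun a : A (idx hn r) => ∑ b : B (idx hn r),
        gA hn A B w r (Function.update x (idx hn r) a) (Function.update y (idx hn r) b)))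
        = (univ.sup' univ_nonempty (fun a : A (idx hn r) => ∑ b : B (idx hn r),
        gA hn A B w r (Function.update x' (idx hn r) a) (Function.update y' (idx hn r) b)))
      refine Finset.sup'_congr _ rfl fun a _ => ?_
      refine Finset.sum_congr rfl fun b _ => ?_
      refine ih (by omega) _ _ _ _ ?_ ?_
      · intro i hi
        by_cases h : i = idx hn r
        · subst h; simp
        · rw [Function.update_of_ne h, Function.update_of_ne h]
          have : (i : ℕ) ≠ n - 1 - r := fun hc => h (Fin.ext hc)
          exact hx i (by omega)
      · intro i hi
        by_cases h : i = idx hn r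
        · subst h; simp
        · rw [Function.update_of_ne h, Function.update_of_ne h]
          have : (i : ℕ) ≠ n - 1 - r := fun hc => h (Fin.ext hc)
          exact hy i (by omega)

lemma gA_const {w} (x x' y y') : gA hn A B w n x y = gA hn A B w n x' y' :=
  gA_dep hn A B n le_rfl x x' y y' (fun i hi => absurd hi (by omega))
    (fun i hi => absurd hi (by omega))

/-- Marginal chain for Alice. -/
noncomputable def PA (s : Fin n → ((i : Fin n) → A i) → ((i : Fin n) → B i) → ℝ)
    (r : ℕ) : ((i : Fin n) → A i) → ((i : Fin n) → B i) → ℝ :=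
  if h : r < n then s (idx hn r) else fun _ _ => 1

variable (s : Fin n → ((i : Fin n) → A i) → ((i : Fin n) → B i) → ℝ)

lemma PA_lt {r : ℕ} (h : r < n) : PA hn A B s r = s (idx hn r) := dif_pos h

lemma PA_ge {r : ℕ} (h : ¬ r < n) : PA hn A B s r = fun _ _ => 1 := dif_neg h

lemma PA_marg
    (hbase : ∀ j : Fin n, (j : ℕ) = 0 → ∀ x y, ∑ a : A j, s j (Function.update x j a) y = 1)
    (hmarg : ∀ j k : Fin n, (j : ℕ) = (k : ℕ) + 1 → ∀ x y,
      ∑ a : A j, s j (Function.update x j a) y = s k x y)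
    (r : ℕ) (hr : r + 1 ≤ n) (x y) :
    ∑ a : A (idx hn r), s (idx hn r) (Function.update x (idx hn r) a) y
      = PA hn A B s (r + 1) x y := by
  by_cases h : r + 1 < n
  · rw [PA_lt hn A B s h]
    exact hmarg (idx hn r) (idx hn (r + 1)) (by simp [idx]; omega) x y
  · rw [PA_ge hn A B s h]
    exact hbase (idx hn r) (by simp [idx]; omega) x y

lemma stepA_le (w)
    (hs0 : ∀ j x y, 0 ≤ s j x y)
    (hdep : ∀ (j : Fin n) x x' y y',
      (∀ i, i ≤ j → x i = x' i) → (∀ i, i < j → y i = y' i) → s j x y = s j x' y')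
    (hbase : ∀ j : Fin n, (j : ℕ) = 0 → ∀ x y, ∑ a : A j, s j (Function.update x j a) y = 1)
    (hmarg : ∀ j k : Fin n, (j : ℕ) = (k : ℕ) + 1 → ∀ x y,
      ∑ a : A j, s j (Function.update x j a) y = s k x y)
    (r : ℕ) (hr : r + 1 ≤ n) :
    ((Fintype.card (A (idx hn r)) : ℝ) * (Fintype.card (B (idx hn r)) : ℝ)) *
      (∑ x, ∑ y, gA hn A B w r x y * PA hn A B s r x y)
    ≤ ∑ x, ∑ y, gA hn A B w (r + 1) x y * PA hn A B s (r + 1) x y := by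
  classical
  set j := idx hn r with hj
  have hrn : r < n := by omega
  have hsdrop : ∀ (x : (i : Fin n) → A i) (y : (i : Fin n) → B i) (b : B j),
      s j x (Function.update y j b) = s j x y :=
    fun x y b => hdep j x x _ y (fun _ _ => rfl)
      (fun i hi => Function.update_of_ne (ne_of_lt hi) _ _)
  have expand :
      ((Fintype.card (A j) : ℝ) * (Fintype.card (B j) : ℝ)) *
        (∑ x, ∑ y, gA hn A B w r x y * PA hn A B s r x y)
      = ∑ x, ∑ y, ∑ a : A j, ∑ b : B j,
          gA hn A B w r (Function.update x j a) (Function.update y j b) *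
            s j (Function.update x j a) (Function.update y j b) := by
    rw [PA_lt hn A B s hrn, ← hj]
    have step1 : ∀ x : (i : Fin n) → A i,
        (Fintype.card (B j) : ℝ) * ∑ y, gA hn A B w r x y * s j x y
        = ∑ y, ∑ b : B j, gA hn A B w r x (Function.update y j b) *
            s j x (Function.update y j b) := by
      intro x
      rw [← sum_update_eq_card_mul B j (fun y => gA hn A B w r x y * s j x y)]
    have step2 :
        (Fintype.card (A j) : ℝ) * ∑ x, (∑ y, ∑ b : B j,
            gA hn A B w r x (Function.update y j b) * s j x (Function.update y j b))
        = ∑ x, ∑ a : A j, ∑ y, ∑ b : B j,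
            gA hn A B w r (Function.update x j a) (Function.update y j b) *
              s j (Function.update x j a) (Function.update y j b) := by
      rw [← sum_update_eq_card_mul A j (fun x => ∑ y, ∑ b : B j,
            gA hn A B w r x (Function.update y j b) * s j x (Function.update y j b))]
    calc ((Fintype.card (A j) : ℝ) * (Fintype.card (B j) : ℝ)) *
          (∑ x, ∑ y, gA hn A B w r x y * s j x y)
        = (Fintype.card (A j) : ℝ) * ∑ x, ((Fintype.card (B j) : ℝ) *
            ∑ y, gA hn A B w r x y * s j x y) := by
          rw [Finset.mul_sum, Finset.mul_sum]
          exact Finset.sum_congr rfl fun x _ => mul_assoc _ _ _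
      _ = (Fintype.card (A j) : ℝ) * ∑ x, (∑ y, ∑ b : B j,
            gA hn A B w r x (Function.update y j b) * s j x (Function.update y j b)) := by
          congr 1; exact Finset.sum_congr rfl fun x _ => step1 x
      _ = ∑ x, ∑ a : A j, ∑ y, ∑ b : B j,
            gA hn A B w r (Function.update x j a) (Function.update y j b) *
              s j (Function.update x j a) (Function.update y j b) := step2
      _ = ∑ x, ∑ y, ∑ a : A j, ∑ b : B j,
            gA hn A B w r (Function.update x j a) (Function.update y j b) *
              s j (Function.update x j a) (Function.update y j b) := by
          exact Finset.sum_congr rfl fun x _ => Finset.sum_comm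
  rw [expand]
  refine Finset.sum_le_sum fun x _ => Finset.sum_le_sum fun y _ => ?_
  have inner : ∀ a : A j,
      ∑ b : B j, gA hn A B w r (Function.update x j a) (Function.update y j b) *
          s j (Function.update x j a) (Function.update y j b)
      ≤ gA hn A B w (r + 1) x y * s j (Function.update x j a) y := by
    intro a
    have h0 : ∑ b : B j, gA hn A B w r (Function.update x j a) (Function.update y j b) *
          s j (Function.update x j a) (Function.update y j b)
        = (∑ b : B j, gA hn A B w r (Function.update x j a) (Function.update y j b)) *
          s j (Function.update x j a) y := by
      rw [Finset.sum_mul]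
      exact Finset.sum_congr rfl fun b _ => by rw [hsdrop (Function.update x j a) y b]
    rw [h0]
    refine mul_le_mul_of_nonneg_right ?_ (hs0 _ _ _)
    exact Finset.le_sup' (fun a' : A j => ∑ b : B j,
      gA hn A B w r (Function.update x j a') (Function.update y j b)) (Finset.mem_univ a)
  calc ∑ a : A j, ∑ b : B j,
        gA hn A B w r (Function.update x j a) (Function.update y j b) *
          s j (Function.update x j a) (Function.update y j b)
      ≤ ∑ a : A j, gA hn A B w (r + 1) x y * s j (Function.update x j a) y :=
        Finset.sum_le_sum fun a _ => inner a
    _ = gA hn A B w (r + 1) x y * PA hn A B s (r + 1) x y := by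
        rw [← Finset.mul_sum, PA_marg hn A B s hbase hmarg r hr x y]

lemma stepA_eq (w)
    (hs0 : ∀ j x y, 0 ≤ s j x y)
    (hdep : ∀ (j : Fin n) x x' y y',
      (∀ i, i ≤ j → x i = x' i) → (∀ i, i < j → y i = y' i) → s j x y = s j x' y')
    (hbase : ∀ j : Fin n, (j : ℕ) = 0 → ∀ x y, ∑ a : A j, s j (Function.update x j a) y = 1)
    (hmarg : ∀ j k : Fin n, (j : ℕ) = (k : ℕ) + 1 → ∀ x y,
      ∑ a : A j, s j (Function.update x j a) y = s k x y)
    (r : ℕ) (hr : r + 1 ≤ n)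
    (halign : ∀ x y (a : A (idx hn r)), s (idx hn r) (Function.update x (idx hn r) a) y ≠ 0 →
      ∑ b : B (idx hn r), gA hn A B w r (Function.update x (idx hn r) a)
          (Function.update y (idx hn r) b)
        = univ.sup' univ_nonempty (fun a' : A (idx hn r) => ∑ b : B (idx hn r),
            gA hn A B w r (Function.update x (idx hn r) a') (Function.update y (idx hn r) b))) :
    ((Fintype.card (A (idx hn r)) : ℝ) * (Fintype.card (B (idx hn r)) : ℝ)) *
      (∑ x, ∑ y, gA hn A B w r x y * PA hn A B s r x y)
    = ∑ x, ∑ y, gA hn A B w (r + 1) x y * PA hn A B s (r + 1) x y := by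
  classical
  set j := idx hn r with hj
  have hrn : r < n := by omega
  have hsdrop : ∀ (x : (i : Fin n) → A i) (y : (i : Fin n) → B i) (b : B j),
      s j x (Function.update y j b) = s j x y :=
    fun x y b => hdep j x x _ y (fun _ _ => rfl)
      (fun i hi => Function.update_of_ne (ne_of_lt hi) _ _)
  have expand :
      ((Fintype.card (A j) : ℝ) * (Fintype.card (B j) : ℝ)) *
        (∑ x, ∑ y, gA hn A B w r x y * PA hn A B s r x y)
      = ∑ x, ∑ y, ∑ a : A j, ∑ b : B j,
          gA hn A B w r (Function.update x j a) (Function.update y j b) *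
            s j (Function.update x j a) (Function.update y j b) := by
    rw [PA_lt hn A B s hrn, ← hj]
    have step1 : ∀ x : (i : Fin n) → A i,
        (Fintype.card (B j) : ℝ) * ∑ y, gA hn A B w r x y * s j x y
        = ∑ y, ∑ b : B j, gA hn A B w r x (Function.update y j b) *
            s j x (Function.update y j b) := by
      intro x
      rw [← sum_update_eq_card_mul B j (fun y => gA hn A B w r x y * s j x y)]
    have step2 :
        (Fintype.card (A j) : ℝ) * ∑ x, (∑ y, ∑ b : B j,
            gA hn A B w r x (Function.update y j b) * s j x (Function.update y j b))
        = ∑ x, ∑ a : A j, ∑ y, ∑ b : B j,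
            gA hn A B w r (Function.update x j a) (Function.update y j b) *
              s j (Function.update x j a) (Function.update y j b) := by
      rw [← sum_update_eq_card_mul A j (fun x => ∑ y, ∑ b : B j,
            gA hn A B w r x (Function.update y j b) * s j x (Function.update y j b))]
    calc ((Fintype.card (A j) : ℝ) * (Fintype.card (B j) : ℝ)) *
          (∑ x, ∑ y, gA hn A B w r x y * s j x y)
        = (Fintype.card (A j) : ℝ) * ∑ x, ((Fintype.card (B j) : ℝ) *
            ∑ y, gA hn A B w r x y * s j x y) := by
          rw [Finset.mul_sum, Finset.mul_sum]
          exact Finset.sum_congr rfl fun x _ => mul_assoc _ _ _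
      _ = (Fintype.card (A j) : ℝ) * ∑ x, (∑ y, ∑ b : B j,
            gA hn A B w r x (Function.update y j b) * s j x (Function.update y j b)) := by
          congr 1; exact Finset.sum_congr rfl fun x _ => step1 x
      _ = ∑ x, ∑ a : A j, ∑ y, ∑ b : B j,
            gA hn A B w r (Function.update x j a) (Function.update y j b) *
              s j (Function.update x j a) (Function.update y j b) := step2
      _ = ∑ x, ∑ y, ∑ a : A j, ∑ b : B j,
            gA hn A B w r (Function.update x j a) (Function.update y j b) *
              s j (Function.update x j a) (Function.update y j b) := by
          exact Finset.sum_congr rfl fun x _ => Finset.sum_comm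
  rw [expand]
  refine Finset.sum_congr rfl fun x _ => Finset.sum_congr rfl fun y _ => ?_
  have inner : ∀ a : A j,
      ∑ b : B j, gA hn A B w r (Function.update x j a) (Function.update y j b) *
          s j (Function.update x j a) (Function.update y j b)
      = gA hn A B w (r + 1) x y * s j (Function.update x j a) y := by
    intro a
    have h0 : ∑ b : B j, gA hn A B w r (Function.update x j a) (Function.update y j b) *
          s j (Function.update x j a) (Function.update y j b)
        = (∑ b : B j, gA hn A B w r (Function.update x j a) (Function.update y j b)) *
          s j (Function.update x j a) y := by
      rw [Finset.sum_mul]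
      exact Finset.sum_congr rfl fun b _ => by rw [hsdrop (Function.update x j a) y b]
    rw [h0]
    by_cases hz : s j (Function.update x j a) y = 0
    · rw [hz, mul_zero, mul_zero]
    · rw [halign x y a hz]
      rfl
  calc ∑ a : A j, ∑ b : B j,
        gA hn A B w r (Function.update x j a) (Function.update y j b) *
          s j (Function.update x j a) (Function.update y j b)
      = ∑ a : A j, gA hn A B w (r + 1) x y * s j (Function.update x j a) y :=
        Finset.sum_congr rfl fun a _ => inner a
    _ = gA hn A B w (r + 1) x y * PA hn A B s (r + 1) x y := by
        rw [← Finset.mul_sum, PA_marg hn A B s hbase hmarg r hr x y]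

/-- The optimal value for Alice. -/
noncomputable def VA (w : ((i : Fin n) → A i) → ((i : Fin n) → B i) → ℝ) : ℝ :=
  gA hn A B w n (Classical.arbitrary _) (Classical.arbitrary _)

lemma snA (w) : ∑ x, ∑ y, gA hn A B w n x y * PA hn A B s n x y
    = (Fintype.card ((i : Fin n) → A i) : ℝ) * (Fintype.card ((i : Fin n) → B i) : ℝ) *
      VA hn A B w := by
  rw [PA_ge hn A B s (lt_irrefl n)]
  have : ∀ x y, gA hn A B w n x y = VA hn A B w := fun x y => gA_const hn A B x _ y _
  calc ∑ x, ∑ y, gA hn A B w n x y * (1 : ℝ)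
      = ∑ _x : (i : Fin n) → A i, ∑ _y : (i : Fin n) → B i, VA hn A B w := by
        exact Finset.sum_congr rfl fun x _ => Finset.sum_congr rfl fun y _ => by
          rw [this x y, mul_one]
    _ = (Fintype.card ((i : Fin n) → A i) : ℝ) * (Fintype.card ((i : Fin n) → B i) : ℝ) *
        VA hn A B w := by
        rw [Finset.sum_const, Finset.sum_const, card_univ, card_univ, nsmul_eq_mul,
          nsmul_eq_mul]
        ring

lemma teleA_le (w) (hs0 : ∀ j x y, 0 ≤ s j x y)
    (hdep : ∀ (j : Fin n) x x' y y',
      (∀ i, i ≤ j → x i = x' i) → (∀ i, i < j → y i = y' i) → s j x y = s j x' y')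
    (hbase : ∀ j : Fin n, (j : ℕ) = 0 → ∀ x y, ∑ a : A j, s j (Function.update x j a) y = 1)
    (hmarg : ∀ j k : Fin n, (j : ℕ) = (k : ℕ) + 1 → ∀ x y,
      ∑ a : A j, s j (Function.update x j a) y = s k x y) :
    ∀ r, r ≤ n →
      (∏ k ∈ Finset.range r, ((Fintype.card (A (idx hn k)) : ℝ) *
        (Fintype.card (B (idx hn k)) : ℝ))) *
        (∑ x, ∑ y, gA hn A B w 0 x y * PA hn A B s 0 x y)
      ≤ ∑ x, ∑ y, gA hn A B w r x y * PA hn A B s r x y := by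
  intro r
  induction r with
  | zero => intro _; rw [Finset.prod_range_zero, one_mul]
  | succ r ih =>
      intro hr
      have ihr := ih (by omega)
      rw [Finset.prod_range_succ]
      calc (∏ k ∈ Finset.range r, ((Fintype.card (A (idx hn k)) : ℝ) *
            (Fintype.card (B (idx hn k)) : ℝ))) *
            ((Fintype.card (A (idx hn r)) : ℝ) * (Fintype.card (B (idx hn r)) : ℝ)) *
            (∑ x, ∑ y, gA hn A B w 0 x y * PA hn A B s 0 x y)
          = ((Fintype.card (A (idx hn r)) : ℝ) * (Fintype.card (B (idx hn r)) : ℝ)) *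
            ((∏ k ∈ Finset.range r, ((Fintype.card (A (idx hn k)) : ℝ) *
              (Fintype.card (B (idx hn k)) : ℝ))) *
              (∑ x, ∑ y, gA hn A B w 0 x y * PA hn A B s 0 x y)) := by ring
        _ ≤ ((Fintype.card (A (idx hn r)) : ℝ) * (Fintype.card (B (idx hn r)) : ℝ)) *
            (∑ x, ∑ y, gA hn A B w r x y * PA hn A B s r x y) :=
            mul_le_mul_of_nonneg_left ihr (le_of_lt (cardsfactor_pos hn A B r))
        _ ≤ ∑ x, ∑ y, gA hn A B w (r + 1) x y * PA hn A B s (r + 1) x y :=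
            stepA_le hn A B s w hs0 hdep hbase hmarg r hr

lemma teleA_eq (w) (hs0 : ∀ j x y, 0 ≤ s j x y)
    (hdep : ∀ (j : Fin n) x x' y y',
      (∀ i, i ≤ j → x i = x' i) → (∀ i, i < j → y i = y' i) → s j x y = s j x' y')
    (hbase : ∀ j : Fin n, (j : ℕ) = 0 → ∀ x y, ∑ a : A j, s j (Function.update x j a) y = 1)
    (hmarg : ∀ j k : Fin n, (j : ℕ) = (k : ℕ) + 1 → ∀ x y,
      ∑ a : A j, s j (Function.update x j a) y = s k x y)
    (halign : ∀ r, r + 1 ≤ n → ∀ x y (a : A (idx hn r)),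
      s (idx hn r) (Function.update x (idx hn r) a) y ≠ 0 →
      ∑ b : B (idx hn r), gA hn A B w r (Function.update x (idx hn r) a)
          (Function.update y (idx hn r) b)
        = univ.sup' univ_nonempty (fun a' : A (idx hn r) => ∑ b : B (idx hn r),
            gA hn A B w r (Function.update x (idx hn r) a')
              (Function.update y (idx hn r) b))) :
    ∀ r, r ≤ n →
      (∏ k ∈ Finset.range r, ((Fintype.card (A (idx hn k)) : ℝ) *
        (Fintype.card (B (idx hn k)) : ℝ))) *
        (∑ x, ∑ y, gA hn A B w 0 x y * PA hn A B s 0 x y)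
      = ∑ x, ∑ y, gA hn A B w r x y * PA hn A B s r x y := by
  intro r
  induction r with
  | zero => intro _; rw [Finset.prod_range_zero, one_mul]
  | succ r ih =>
      intro hr
      have ihr := ih (by omega)
      rw [Finset.prod_range_succ]
      calc (∏ k ∈ Finset.range r, ((Fintype.card (A (idx hn k)) : ℝ) *
            (Fintype.card (B (idx hn k)) : ℝ))) *
            ((Fintype.card (A (idx hn r)) : ℝ) * (Fintype.card (B (idx hn r)) : ℝ)) *
            (∑ x, ∑ y, gA hn A B w 0 x y * PA hn A B s 0 x y)
          = ((Fintype.card (A (idx hn r)) : ℝ) * (Fintype.card (B (idx hn r)) : ℝ)) *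
            ((∏ k ∈ Finset.range r, ((Fintype.card (A (idx hn k)) : ℝ) *
              (Fintype.card (B (idx hn k)) : ℝ))) *
              (∑ x, ∑ y, gA hn A B w 0 x y * PA hn A B s 0 x y)) := by ring
        _ = ((Fintype.card (A (idx hn r)) : ℝ) * (Fintype.card (B (idx hn r)) : ℝ)) *
            (∑ x, ∑ y, gA hn A B w r x y * PA hn A B s r x y) := by rw [ihr]
        _ = ∑ x, ∑ y, gA hn A B w (r + 1) x y * PA hn A B s (r + 1) x y :=
            stepA_eq hn A B s w hs0 hdep hbase hmarg r hr (halign r hr)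

lemma alice_le (w) (hs0 : ∀ j x y, 0 ≤ s j x y)
    (hdep : ∀ (j : Fin n) x x' y y',
      (∀ i, i ≤ j → x i = x' i) → (∀ i, i < j → y i = y' i) → s j x y = s j x' y')
    (hbase : ∀ j : Fin n, (j : ℕ) = 0 → ∀ x y, ∑ a : A j, s j (Function.update x j a) y = 1)
    (hmarg : ∀ j k : Fin n, (j : ℕ) = (k : ℕ) + 1 → ∀ x y,
      ∑ a : A j, s j (Function.update x j a) y = s k x y) :
    ∑ x, ∑ y, gA hn A B w 0 x y * PA hn A B s 0 x y ≤ VA hn A B w := by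
  have h := teleA_le hn A B s w hs0 hdep hbase hmarg n le_rfl
  rw [snA hn A B s w, prod_cards hn A B] at h
  have hpos : (0:ℝ) < (Fintype.card ((i : Fin n) → A i) : ℝ) *
      (Fintype.card ((i : Fin n) → B i) : ℝ) := by
    have h1 : 0 < Fintype.card ((i : Fin n) → A i) := Fintype.card_pos
    have h2 : 0 < Fintype.card ((i : Fin n) → B i) := Fintype.card_pos
    positivity
  exact le_of_mul_le_mul_left h hpos

lemma alice_eq (w) (hs0 : ∀ j x y, 0 ≤ s j x y)
    (hdep : ∀ (j : Fin n) x x' y y',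
      (∀ i, i ≤ j → x i = x' i) → (∀ i, i < j → y i = y' i) → s j x y = s j x' y')
    (hbase : ∀ j : Fin n, (j : ℕ) = 0 → ∀ x y, ∑ a : A j, s j (Function.update x j a) y = 1)
    (hmarg : ∀ j k : Fin n, (j : ℕ) = (k : ℕ) + 1 → ∀ x y,
      ∑ a : A j, s j (Function.update x j a) y = s k x y)
    (halign : ∀ r, r + 1 ≤ n → ∀ x y (a : A (idx hn r)),
      s (idx hn r) (Function.update x (idx hn r) a) y ≠ 0 →
      ∑ b : B (idx hn r), gA hn A B w r (Function.update x (idx hn r) a)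
          (Function.update y (idx hn r) b)
        = univ.sup' univ_nonempty (fun a' : A (idx hn r) => ∑ b : B (idx hn r),
            gA hn A B w r (Function.update x (idx hn r) a')
              (Function.update y (idx hn r) b))) :
    ∑ x, ∑ y, gA hn A B w 0 x y * PA hn A B s 0 x y = VA hn A B w := by
  have h := teleA_eq hn A B s w hs0 hdep hbase hmarg halign n le_rfl
  rw [snA hn A B s w, prod_cards hn A B] at h
  have hpos : (0:ℝ) < (Fintype.card ((i : Fin n) → A i) : ℝ) *
      (Fintype.card ((i : Fin n) → B i) : ℝ) := by
    have h1 : 0 < Fintype.card ((i : Fin n) → A i) := Fintype.card_pos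
    have h2 : 0 < Fintype.card ((i : Fin n) → B i) := Fintype.card_pos
    positivity
  exact mul_left_cancel₀ (ne_of_gt hpos) h


lemma gA_nonneg {w} (hw : ∀ x y, 0 ≤ w x y) : ∀ r x y, 0 ≤ gA hn A B w r x y := by
  intro r
  induction r with
  | zero => exact hw
  | succ r ih =>
      intro x y
      have h2 := Finset.le_sup' (fun a : A (idx hn r) => ∑ b : B (idx hn r),
        gA hn A B w r (Function.update x (idx hn r) a) (Function.update y (idx hn r) b))
        (Finset.mem_univ (Classical.arbitrary (A (idx hn r))))
      refine le_trans ?_ h2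
      exact Finset.sum_nonneg fun b _ => ih _ _

lemma exA (w) (i : Fin n) (x : (k : Fin n) → A k) (y : (k : Fin n) → B k) :
    ∃ a : A i, univ.sup' univ_nonempty
        (fun a' : A i => ∑ b : B i, gA hn A B w (n - 1 - (i : ℕ))
          (Function.update x i a') (Function.update y i b))
      = ∑ b : B i, gA hn A B w (n - 1 - (i : ℕ))
          (Function.update x i a) (Function.update y i b) := by
  obtain ⟨a, _, ha⟩ := Finset.exists_mem_eq_sup' (univ_nonempty)
    (fun a' : A i => ∑ b : B i, gA hn A B w (n - 1 - (i : ℕ))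
      (Function.update x i a') (Function.update y i b))
  exact ⟨a, ha⟩

noncomputable def fA0 (w : ((i : Fin n) → A i) → ((i : Fin n) → B i) → ℝ)
    (i : Fin n) (x : (k : Fin n) → A k) (y : (k : Fin n) → B k) : A i :=
  Classical.choose (exA hn A B w i x y)

/-- Alice's deterministic optimal choice in round `i`. -/
noncomputable def fA (w : ((i : Fin n) → A i) → ((i : Fin n) → B i) → ℝ)
    (i : Fin n) (x : (k : Fin n) → A k) (y : (k : Fin n) → B k) : A i :=
  fA0 hn A B w i (truncLt A i x) (truncLt B i y)

lemma fA_congr (w) (i : Fin n) (x x' y y')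
    (hx : ∀ k, k < i → x k = x' k) (hy : ∀ k, k < i → y k = y' k) :
    fA hn A B w i x y = fA hn A B w i x' y' := by
  have h1 : truncLt A i x = truncLt A i x' := by
    funext k
    unfold truncLt
    split
    · exact hx k (by assumption)
    · rfl
  have h2 : truncLt B i y = truncLt B i y' := by
    funext k
    unfold truncLt
    split
    · exact hy k (by assumption)
    · rfl
  unfold fA
  rw [h1, h2]

lemma fA_spec (w) (i : Fin n) (x : (k : Fin n) → A k) (y : (k : Fin n) → B k) :
    univ.sup' univ_nonempty
        (fun a' : A i => ∑ b : B i, gA hn A B w (n - 1 - (i : ℕ))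
          (Function.update x i a') (Function.update y i b))
      = ∑ b : B i, gA hn A B w (n - 1 - (i : ℕ))
          (Function.update x i (fA hn A B w i x y)) (Function.update y i b) := by
  have hb : univ.sup' univ_nonempty
        (fun a' : A i => ∑ b : B i, gA hn A B w (n - 1 - (i : ℕ))
          (Function.update (truncLt A i x) i a') (Function.update (truncLt B i y) i b))
      = ∑ b : B i, gA hn A B w (n - 1 - (i : ℕ))
          (Function.update (truncLt A i x) i (fA hn A B w i x y))
          (Function.update (truncLt B i y) i b) :=
    Classical.choose_spec (exA hn A B w i (truncLt A i x) (truncLt B i y))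
  have key : ∀ (a : A i) (b : B i),
      gA hn A B w (n - 1 - (i : ℕ)) (Function.update (truncLt A i x) i a)
        (Function.update (truncLt B i y) i b)
      = gA hn A B w (n - 1 - (i : ℕ)) (Function.update x i a) (Function.update y i b) := by
    intro a b
    refine gA_dep hn A B (n - 1 - (i : ℕ)) (by omega) _ _ _ _ ?_ ?_
    · intro k hk
      by_cases hki : k = i
      · subst hki; simp
      · have hlt : k < i := by
          have := i.isLt
          have hk' : (k : ℕ) < n - (n - 1 - (i : ℕ)) := hk
          have h2 : k ≤ i := by rw [Fin.le_def]; omega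
          exact lt_of_le_of_ne h2 hki
        rw [Function.update_of_ne hki, Function.update_of_ne hki]
        unfold truncLt
        rw [if_pos hlt]
    · intro k hk
      by_cases hki : k = i
      · subst hki; simp
      · have hlt : k < i := by
          have := i.isLt
          have hk' : (k : ℕ) < n - (n - 1 - (i : ℕ)) := hk
          have h2 : k ≤ i := by rw [Fin.le_def]; omega
          exact lt_of_le_of_ne h2 hki
        rw [Function.update_of_ne hki, Function.update_of_ne hki]
        unfold truncLt
        rw [if_pos hlt]
  calc univ.sup' univ_nonempty
        (fun a' : A i => ∑ b : B i, gA hn A B w (n - 1 - (i : ℕ))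
          (Function.update x i a') (Function.update y i b))
      = univ.sup' univ_nonempty
        (fun a' : A i => ∑ b : B i, gA hn A B w (n - 1 - (i : ℕ))
          (Function.update (truncLt A i x) i a') (Function.update (truncLt B i y) i b)) := by
        refine Finset.sup'_congr _ rfl fun a _ => ?_
        exact Finset.sum_congr rfl fun b _ => (key a b).symm
    _ = ∑ b : B i, gA hn A B w (n - 1 - (i : ℕ))
          (Function.update (truncLt A i x) i (fA hn A B w i x y))
          (Function.update (truncLt B i y) i b) := hb
    _ = ∑ b : B i, gA hn A B w (n - 1 - (i : ℕ))
          (Function.update x i (fA hn A B w i x y)) (Function.update y i b) :=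
        Finset.sum_congr rfl fun b _ => key _ b

open Classical in
/-- Alice's deterministic optimal strategy. -/
noncomputable def sdet (w : ((i : Fin n) → A i) → ((i : Fin n) → B i) → ℝ)
    (j : Fin n) (x : (k : Fin n) → A k) (y : (k : Fin n) → B k) : ℝ :=
  if (∀ i, i ≤ j → x i = fA hn A B w i x y) then 1 else 0

lemma sdet_01 (w) (j : Fin n) (x : (k : Fin n) → A k) (y : (k : Fin n) → B k) :
    sdet hn A B w j x y = 0 ∨ sdet hn A B w j x y = 1 := by
  classical
  unfold sdet
  split
  · right; rfl
  · left; rfl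

lemma sdet_nonneg (w) (j : Fin n) (x : (k : Fin n) → A k) (y : (k : Fin n) → B k) :
    0 ≤ sdet hn A B w j x y := by
  rcases sdet_01 hn A B w j x y with h | h <;> rw [h] <;> norm_num

lemma sdet_dep (w) (j : Fin n) (x x' y y')
    (hx : ∀ i, i ≤ j → x i = x' i) (hy : ∀ i, i < j → y i = y' i) :
    sdet hn A B w j x y = sdet hn A B w j x' y' := by
  classical
  unfold sdet
  refine if_congr ?_ rfl rfl
  have hfa : ∀ i, i ≤ j → fA hn A B w i x y = fA hn A B w i x' y' := fun i hi =>
    fA_congr hn A B w i x x' y y'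
      (fun k hk => hx k (le_trans (le_of_lt hk) hi))
      (fun k hk => hy k (lt_of_lt_of_le hk hi))
  constructor
  · intro h i hi
    rw [← hx i hi, ← hfa i hi]
    exact h i hi
  · intro h i hi
    rw [hx i hi, hfa i hi]
    exact h i hi

lemma fA_update_self (w) (j : Fin n) (x : (k : Fin n) → A k) (y : (k : Fin n) → B k)
    (a : A j) : fA hn A B w j (Function.update x j a) y = fA hn A B w j x y :=
  fA_congr hn A B w j _ x y y
    (fun k hk => Function.update_of_ne (ne_of_lt hk) _ _) (fun _ _ => rfl)

lemma sdet_cond_iff (w) (j k : Fin n) (hjk : (j : ℕ) = (k : ℕ) + 1)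
    (x : (l : Fin n) → A l) (y : (l : Fin n) → B l) (a : A j) :
    (∀ i, i ≤ j → (Function.update x j a) i = fA hn A B w i (Function.update x j a) y)
    ↔ ((∀ i, i ≤ k → x i = fA hn A B w i x y) ∧ a = fA hn A B w j x y) := by
  constructor
  · intro h
    constructor
    · intro i hi
      have hij : i < j := by
        rw [Fin.lt_def]; rw [Fin.le_def] at hi; omega
      have h1 := h i (le_of_lt hij)
      rw [Function.update_of_ne (ne_of_lt hij)] at h1
      rw [h1]
      exact fA_congr hn A B w i _ x y y
        (fun l hl => Function.update_of_ne (ne_of_lt (lt_trans hl hij)) _ _)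
        (fun _ _ => rfl)
    · have h1 := h j le_rfl
      rw [Function.update_self] at h1
      rw [h1]
      exact fA_update_self hn A B w j x y a
  · rintro ⟨h1, h2⟩ i hi
    by_cases hij : i = j
    · subst hij
      rw [Function.update_self, fA_update_self hn A B w i x y a]
      exact h2
    · have hij' : i < j := lt_of_le_of_ne hi hij
      have hik : i ≤ k := by
        rw [Fin.le_def]; rw [Fin.lt_def] at hij'; omega
      rw [Function.update_of_ne hij]
      rw [fA_congr hn A B w i (Function.update x j a) x y y
        (fun l hl => Function.update_of_ne (ne_of_lt (lt_trans hl hij')) _ _)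
        (fun _ _ => rfl)]
      exact h1 i hik

lemma sdet_base (w) (j : Fin n) (hj : (j : ℕ) = 0)
    (x : (l : Fin n) → A l) (y : (l : Fin n) → B l) :
    ∑ a : A j, sdet hn A B w j (Function.update x j a) y = 1 := by
  classical
  have hcond : ∀ a : A j,
      (∀ i, i ≤ j → (Function.update x j a) i = fA hn A B w i (Function.update x j a) y)
      ↔ a = fA hn A B w j x y := by
    intro a
    constructor
    · intro h
      have h1 := h j le_rfl
      rw [Function.update_self] at h1
      rw [h1]
      exact fA_update_self hn A B w j x y a
    · intro h i hi
      have hij : i = j := by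
        apply Fin.ext
        rw [Fin.le_def, hj] at hi
        omega
      subst hij
      rw [Function.update_self, fA_update_self hn A B w i x y a]
      exact h
  calc ∑ a : A j, sdet hn A B w j (Function.update x j a) y
      = ∑ a : A j, if a = fA hn A B w j x y then (1:ℝ) else 0 := by
        refine Finset.sum_congr rfl fun a _ => ?_
        unfold sdet
        exact if_congr (hcond a) rfl rfl
    _ = 1 := by rw [Finset.sum_ite_eq' univ (fA hn A B w j x y) (fun _ => (1:ℝ)),
          if_pos (Finset.mem_univ _)]

lemma sdet_marg (w) (j k : Fin n) (hjk : (j : ℕ) = (k : ℕ) + 1)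
    (x : (l : Fin n) → A l) (y : (l : Fin n) → B l) :
    ∑ a : A j, sdet hn A B w j (Function.update x j a) y = sdet hn A B w k x y := by
  classical
  calc ∑ a : A j, sdet hn A B w j (Function.update x j a) y
      = ∑ a : A j, if ((∀ i, i ≤ k → x i = fA hn A B w i x y)
          ∧ a = fA hn A B w j x y) then (1:ℝ) else 0 := by
        refine Finset.sum_congr rfl fun a _ => ?_
        unfold sdet
        exact if_congr (sdet_cond_iff hn A B w j k hjk x y a) rfl rfl
    _ = sdet hn A B w k x y := by
        by_cases hD : (∀ i, i ≤ k → x i = fA hn A B w i x y)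
        · have : ∀ a : A j, (((∀ i, i ≤ k → x i = fA hn A B w i x y)
              ∧ a = fA hn A B w j x y) ↔ a = fA hn A B w j x y) := by
            intro a; constructor
            · exact fun h => h.2
            · exact fun h => ⟨hD, h⟩
          rw [Finset.sum_congr rfl fun a _ => if_congr (this a) rfl rfl]
          rw [Finset.sum_ite_eq' univ (fA hn A B w j x y) (fun _ => (1:ℝ)),
            if_pos (Finset.mem_univ _)]
          unfold sdet
          rw [if_pos hD]
        · have : ∀ a : A j, ¬((∀ i, i ≤ k → x i = fA hn A B w i x y)
              ∧ a = fA hn A B w j x y) := fun a h => hD h.1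
          rw [Finset.sum_congr rfl fun a _ => if_neg (this a)]
          rw [Finset.sum_const, smul_zero]
          unfold sdet
          rw [if_neg hD]

lemma sdet_align (w) : ∀ r, r + 1 ≤ n → ∀ x y (a : A (idx hn r)),
    sdet hn A B w (idx hn r) (Function.update x (idx hn r) a) y ≠ 0 →
    ∑ b : B (idx hn r), gA hn A B w r (Function.update x (idx hn r) a)
        (Function.update y (idx hn r) b)
      = univ.sup' univ_nonempty (fun a' : A (idx hn r) => ∑ b : B (idx hn r),
          gA hn A B w r (Function.update x (idx hn r) a')
            (Function.update y (idx hn r) b)) := by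
  classical
  intro r hr x y a hnz
  have hcond : ∀ i, i ≤ idx hn r →
      (Function.update x (idx hn r) a) i
        = fA hn A B w i (Function.update x (idx hn r) a) y := by
    by_contra hc
    apply hnz
    unfold sdet
    rw [if_neg hc]
  have ha : a = fA hn A B w (idx hn r) x y := by
    have h1 := hcond (idx hn r) le_rfl
    rw [Function.update_self] at h1
    rw [h1]
    exact fA_update_self hn A B w (idx hn r) x y a
  have hjv : ((idx hn r : Fin n) : ℕ) = n - 1 - r := rfl
  have hrj : n - 1 - ((idx hn r : Fin n) : ℕ) = r := by rw [hjv]; omega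
  have hspec := fA_spec hn A B w (idx hn r) x y
  rw [hrj] at hspec
  rw [ha]
  exact hspec.symm

end Alice


section Bridge

variable {n : ℕ} (hn : 0 < n) (A B : Fin n → Type) [∀ i, Fintype (A i)] [∀ i, Nonempty (A i)]
  [∀ i, Fintype (B i)] [∀ i, Nonempty (B i)]
  (α : Bool → ((i : Fin n) → A i) → ℝ) (β : Bool → ((i : Fin n) → B i) → ℝ) (c : Bool)

lemma bobObjC_eq (p : Fin n → ((i : Fin n) → A i) → ((i : Fin n) → B i) → ℝ) :
    BCCF.bobObjC A B hn α β c p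
      = ∑ x, ∑ y, ((1/2 : ℝ) * ∑ a : Bool, α a x *
          (if β (Bool.xor a c) y ≠ 0 then (1:ℝ) else 0)) *
          p ⟨n - 1, Nat.sub_lt hn Nat.one_pos⟩ x y := by
  classical
  unfold BCCF.bobObjC
  calc (1/2 : ℝ) * ∑ a : Bool, ∑ y ∈ univ.filter (fun y => β (Bool.xor a c) y ≠ 0),
        ∑ x, α a x * p ⟨n - 1, Nat.sub_lt hn Nat.one_pos⟩ x y
      = ∑ a : Bool, ∑ y, ∑ x, (1/2 : ℝ) *
          ((if β (Bool.xor a c) y ≠ 0 then (1:ℝ) else 0) *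
          (α a x * p ⟨n - 1, Nat.sub_lt hn Nat.one_pos⟩ x y)) := by
        rw [Finset.mul_sum]
        refine Finset.sum_congr rfl fun a _ => ?_
        rw [Finset.sum_filter, Finset.mul_sum]
        refine Finset.sum_congr rfl fun y _ => ?_
        by_cases h : β (Bool.xor a c) y ≠ 0
        · simp only [if_pos h]
          rw [Finset.mul_sum]
          exact Finset.sum_congr rfl fun x _ => by ring
        · simp only [if_neg h]
          simp
    _ = ∑ y, ∑ a : Bool, ∑ x, (1/2 : ℝ) *
          ((if β (Bool.xor a c) y ≠ 0 then (1:ℝ) else 0) *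
          (α a x * p ⟨n - 1, Nat.sub_lt hn Nat.one_pos⟩ x y)) := Finset.sum_comm
    _ = ∑ y, ∑ x, ∑ a : Bool, (1/2 : ℝ) *
          ((if β (Bool.xor a c) y ≠ 0 then (1:ℝ) else 0) *
          (α a x * p ⟨n - 1, Nat.sub_lt hn Nat.one_pos⟩ x y)) :=
        Finset.sum_congr rfl fun y _ => Finset.sum_comm
    _ = ∑ x, ∑ y, ∑ a : Bool, (1/2 : ℝ) *
          ((if β (Bool.xor a c) y ≠ 0 then (1:ℝ) else 0) *
          (α a x * p ⟨n - 1, Nat.sub_lt hn Nat.one_pos⟩ x y)) := Finset.sum_comm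
    _ = ∑ x, ∑ y, ((1/2 : ℝ) * ∑ a : Bool, α a x *
          (if β (Bool.xor a c) y ≠ 0 then (1:ℝ) else 0)) *
          p ⟨n - 1, Nat.sub_lt hn Nat.one_pos⟩ x y := by
        refine Finset.sum_congr rfl fun x _ => Finset.sum_congr rfl fun y _ => ?_
        rw [Finset.mul_sum, Finset.sum_mul]
        exact Finset.sum_congr rfl fun a _ => by ring

lemma aliceObjC_eq (sF : Bool → ((i : Fin n) → A i) → ((i : Fin n) → B i) → ℝ) :
    BCCF.aliceObjC A B α β c sF
      = ∑ x, ∑ y,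
        (((1/2:ℝ) * β (Bool.xor false c) y * (if α false x ≠ 0 then (1:ℝ) else 0)) *
            sF false x y
          + ((1/2:ℝ) * β (Bool.xor true c) y * (if α true x ≠ 0 then (1:ℝ) else 0)) *
            sF true x y) := by
  classical
  unfold BCCF.aliceObjC
  calc (1/2 : ℝ) * ∑ a : Bool, ∑ y, β (Bool.xor a c) y *
        ∑ x ∈ univ.filter (fun x => α a x ≠ 0), sF a x y
      = ∑ a : Bool, ∑ y, ∑ x, ((1/2:ℝ) * β (Bool.xor a c) y *
          (if α a x ≠ 0 then (1:ℝ) else 0)) * sF a x y := by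
        rw [Finset.mul_sum]
        refine Finset.sum_congr rfl fun a _ => ?_
        rw [Finset.mul_sum]
        refine Finset.sum_congr rfl fun y _ => ?_
        rw [Finset.sum_filter, Finset.mul_sum, Finset.mul_sum]
        refine Finset.sum_congr rfl fun x _ => ?_
        by_cases h : α a x ≠ 0
        · simp only [if_pos h]; ring
        · simp only [if_neg h]; ring
    _ = ∑ y, ∑ a : Bool, ∑ x, ((1/2:ℝ) * β (Bool.xor a c) y *
          (if α a x ≠ 0 then (1:ℝ) else 0)) * sF a x y := Finset.sum_comm
    _ = ∑ y, ∑ x, ∑ a : Bool, ((1/2:ℝ) * β (Bool.xor a c) y *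
          (if α a x ≠ 0 then (1:ℝ) else 0)) * sF a x y :=
        Finset.sum_congr rfl fun y _ => Finset.sum_comm
    _ = ∑ x, ∑ y, ∑ a : Bool, ((1/2:ℝ) * β (Bool.xor a c) y *
          (if α a x ≠ 0 then (1:ℝ) else 0)) * sF a x y := Finset.sum_comm
    _ = ∑ x, ∑ y,
        (((1/2:ℝ) * β (Bool.xor false c) y * (if α false x ≠ 0 then (1:ℝ) else 0)) *
            sF false x y
          + ((1/2:ℝ) * β (Bool.xor true c) y * (if α true x ≠ 0 then (1:ℝ) else 0)) *
            sF true x y) := by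
        refine Finset.sum_congr rfl fun x _ => Finset.sum_congr rfl fun y _ => ?_
        rw [Fintype.sum_bool]
        ring

lemma bob_case (CB : ℝ) (hCB : IsGreatest (BCCF.bobValsC A B hn α β c) CB) :
    ∃ p, BCCF.MemBob A B p ∧ (∀ j x y, p j x y = 0 ∨ p j x y = 1) ∧
      CB = BCCF.bobObjC A B hn α β c p := by
  classical
  set w : ((i : Fin n) → A i) → ((i : Fin n) → B i) → ℝ :=
    fun x y => (1/2 : ℝ) * ∑ a : Bool, α a x *
      (if β (Bool.xor a c) y ≠ 0 then (1:ℝ) else 0) with hwdef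
  have hobj : ∀ q : Fin n → ((i : Fin n) → A i) → ((i : Fin n) → B i) → ℝ,
      BCCF.bobObjC A B hn α β c q
        = ∑ x, ∑ y, gB hn A B w 0 x y * PB hn A B q 0 x y := by
    intro q
    rw [bobObjC_eq hn A B α β c q, PB_lt hn A B q hn]
    rfl
  refine ⟨pdet hn A B w,
    ⟨pdet_nonneg hn A B w, pdet_dep hn A B w, pdet_base hn A B w, pdet_marg hn A B w⟩,
    pdet_01 hn A B w, ?_⟩
  have hval : BCCF.bobObjC A B hn α β c (pdet hn A B w) = VB hn A B w := by
    rw [hobj]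
    exact bob_eq hn A B (pdet hn A B w) w (pdet_nonneg hn A B w) (pdet_dep hn A B w)
      (pdet_base hn A B w) (pdet_marg hn A B w) (pdet_align hn A B w)
  have h1 : CB ≤ BCCF.bobObjC A B hn α β c (pdet hn A B w) := by
    obtain ⟨q, hq, hqv⟩ := hCB.1
    obtain ⟨hq0, hqd, hqb, hqm⟩ := hq
    rw [hqv, hval, hobj]
    exact bob_le hn A B q w hq0 hqd hqb hqm
  have h2 : BCCF.bobObjC A B hn α β c (pdet hn A B w) ≤ CB :=
    hCB.2 ⟨pdet hn A B w,
      ⟨pdet_nonneg hn A B w, pdet_dep hn A B w, pdet_base hn A B w, pdet_marg hn A B w⟩, rfl⟩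
  exact le_antisymm h1 h2

lemma alice_case (CA : ℝ) (hCA : IsGreatest (BCCF.aliceValsC A B hn α β c) CA) :
    ∃ s sF, BCCF.MemAlice A B hn s sF ∧
      (∀ j x y, s j x y = 0 ∨ s j x y = 1) ∧
      (∀ a x y, sF a x y = 0 ∨ sF a x y = 1) ∧
      CA = BCCF.aliceObjC A B α β c sF := by
  classical
  set m : Bool → ((i : Fin n) → A i) → ((i : Fin n) → B i) → ℝ :=
    fun a x y => (1/2:ℝ) * β (Bool.xor a c) y * (if α a x ≠ 0 then (1:ℝ) else 0) with hmdef
  set M : ((i : Fin n) → A i) → ((i : Fin n) → B i) → ℝ :=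
    fun x y => max (m false x y) (m true x y) with hMdef
  set sd := sdet hn A B M with hsddef
  set astar : ((i : Fin n) → A i) → ((i : Fin n) → B i) → Bool :=
    fun x y => if m false x y < m true x y then true else false with hastardef
  set sF : Bool → ((i : Fin n) → A i) → ((i : Fin n) → B i) → ℝ :=
    fun a x y => if a = astar x y then sd ⟨n - 1, Nat.sub_lt hn Nat.one_pos⟩ x y else 0
    with hsFdef
  have hsFsum : ∀ x y, sF false x y + sF true x y
      = sd ⟨n - 1, Nat.sub_lt hn Nat.one_pos⟩ x y := by
    intro x y
    by_cases h : astar x y = true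
    · simp [hsFdef, h]
    · have h' : astar x y = false := by
        cases hh : astar x y
        · rfl
        · exact absurd hh h
      simp [hsFdef, h']
  have hmem : BCCF.MemAlice A B hn sd sF := by
    refine ⟨sdet_nonneg hn A B M, ?_, sdet_dep hn A B M, sdet_base hn A B M,
      sdet_marg hn A B M, hsFsum⟩
    intro a x y
    simp only [hsFdef]
    split
    · exact sdet_nonneg hn A B M _ x y
    · exact le_refl 0
  have hMsF : ∀ x y, m false x y * sF false x y + m true x y * sF true x y
      = M x y * sd ⟨n - 1, Nat.sub_lt hn Nat.one_pos⟩ x y := by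
    intro x y
    by_cases h : m false x y < m true x y
    · have ha : astar x y = true := by simp [hastardef, h]
      have hM : M x y = m true x y := max_eq_right (le_of_lt h)
      have hf : sF false x y = 0 := by simp [hsFdef, ha]
      have ht : sF true x y = sd ⟨n - 1, Nat.sub_lt hn Nat.one_pos⟩ x y := by
        simp [hsFdef, ha]
      rw [hf, ht, hM]
      ring
    · have ha : astar x y = false := by simp [hastardef, h]
      have hM : M x y = m false x y := max_eq_left (not_lt.mp h)
      have hf : sF false x y = sd ⟨n - 1, Nat.sub_lt hn Nat.one_pos⟩ x y := by
        simp [hsFdef, ha]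
      have ht : sF true x y = 0 := by simp [hsFdef, ha]
      rw [hf, ht, hM]
      ring
  have hobj : BCCF.aliceObjC A B α β c sF
      = ∑ x, ∑ y, gA hn A B M 0 x y * PA hn A B sd 0 x y := by
    rw [aliceObjC_eq A B α β c sF, PA_lt hn A B sd hn]
    refine Finset.sum_congr rfl fun x _ => Finset.sum_congr rfl fun y _ => ?_
    have := hMsF x y
    simp only [hmdef] at this ⊢
    rw [this]
    rfl
  refine ⟨sd, sF, hmem, sdet_01 hn A B M, ?_, ?_⟩
  · intro a x y
    simp only [hsFdef]
    split
    · exact sdet_01 hn A B M _ x y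
    · left; rfl
  · have hval : BCCF.aliceObjC A B α β c sF = VA hn A B M := by
      rw [hobj]
      exact alice_eq hn A B sd M (sdet_nonneg hn A B M) (sdet_dep hn A B M)
        (sdet_base hn A B M) (sdet_marg hn A B M) (sdet_align hn A B M)
    have h1 : CA ≤ BCCF.aliceObjC A B α β c sF := by
      obtain ⟨s', sF', hmem', hv'⟩ := hCA.1
      obtain ⟨hs0', hsF0', hdep', hbase', hmarg', hsum'⟩ := hmem'
      rw [hv', hval]
      have hle1 : BCCF.aliceObjC A B α β c sF'
          ≤ ∑ x, ∑ y, gA hn A B M 0 x y * PA hn A B s' 0 x y := by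
        rw [aliceObjC_eq A B α β c sF', PA_lt hn A B s' hn]
        refine Finset.sum_le_sum fun x _ => Finset.sum_le_sum fun y _ => ?_
        have hMf : m false x y ≤ M x y := le_max_left _ _
        have hMt : m true x y ≤ M x y := le_max_right _ _
        have key : m false x y * sF' false x y + m true x y * sF' true x y
            ≤ M x y * (sF' false x y + sF' true x y) := by
          rw [mul_add]
          exact add_le_add (mul_le_mul_of_nonneg_right hMf (hsF0' false x y))
            (mul_le_mul_of_nonneg_right hMt (hsF0' true x y))
        rw [hsum' x y] at key
        simp only [hmdef] at key ⊢
        exact key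
      calc BCCF.aliceObjC A B α β c sF'
          ≤ ∑ x, ∑ y, gA hn A B M 0 x y * PA hn A B s' 0 x y := hle1
        _ ≤ VA hn A B M := alice_le hn A B s' M hs0' hdep' hbase' hmarg'
    have h2 : BCCF.aliceObjC A B α β c sF ≤ CA := hCA.2 ⟨sd, sF, hmem, rfl⟩
    exact le_antisymm h1 h2

end Bridge

end BCCF2

namespace BCCF

theorem classical_deterministic_optimal {n : ℕ} (hn : 0 < n) (A B : Fin n → Type)
    [∀ i, Fintype (A i)] [∀ i, Nonempty (A i)] [∀ i, Fintype (B i)] [∀ i, Nonempty (B i)]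
    (α : Bool → ((i : Fin n) → A i) → ℝ) (β : Bool → ((i : Fin n) → B i) → ℝ)
    (hα : ∀ a, IsProbDist (α a)) (hβ : ∀ b, IsProbDist (β b))
    (CA CB : Bool → ℝ)
    (hCA : ∀ c, IsGreatest (aliceValsC A B hn α β c) (CA c))
    (hCB : ∀ c, IsGreatest (bobValsC A B hn α β c) (CB c)) :
    ∀ c : Bool,
      (∃ p, MemBob A B p ∧ (∀ j x y, p j x y = 0 ∨ p j x y = 1) ∧
        CB c = bobObjC A B hn α β c p) ∧
      (∃ s sF, MemAlice A B hn s sF ∧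
        (∀ j x y, s j x y = 0 ∨ s j x y = 1) ∧
        (∀ a x y, sF a x y = 0 ∨ sF a x y = 1) ∧
        CA c = aliceObjC A B α β c sF) := by
  intro c
  exact ⟨BCCF2.bob_case hn A B α β c (CB c) (hCB c),
    BCCF2.alice_case hn A B α β c (CA c) (hCA c)⟩


end BCCF
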